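/- arXiv:2301.07270 — 10 statements merged into one kernel-verified Lean document; each statement's English description precedes it below -/
import Mathlib

section
/- If X is a stationary point of f(X) = (1/2)tr(XᵀAX) + (μ/4)‖XᵀX − W‖_F², where A is real symmetric, μ > 0, and W is diagonal with distinct diagonal entries, then XᵀX is a diagonal matrix. -/
open Matrix

/-- At a stationary point of the weighted trace-penalty objective,
`XᵀX` is diagonal. -/
theorem stmt_0 {n p : ℕ}
    (A : Matrix (Fin n) (Fin n) ℝ) (hA : A.IsSymm)
    (μ : ℝ) (hμ : 0 < μ)
    (w : Fin p → ℝ) (hw : Function.Injective w)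
    (X : Matrix (Fin n) (Fin p) ℝ)
    (hstat : A * X + μ • (X * (Xᵀ * X - Matrix.diagonal w)) = 0) :
    (Xᵀ * X).IsDiag := by
  set M := Xᵀ * X with hM
  set W := Matrix.diagonal w with hW
  have h1 : Xᵀ * A * X + μ • (M * M - M * W) = 0 := by
    have := congrArg (fun Y => Xᵀ * Y) hstat
    simpa [Matrix.mul_add, Matrix.mul_smul, Matrix.mul_sub, Matrix.mul_assoc, hM] using this
  have h2 : Xᵀ * A * X + μ • (M * M - W * M) = 0 := by
    have := congrArg Matrix.transpose h1
    have hMs : Mᵀ = M := by simp [hM, Matrix.transpose_mul]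
    have hWs : Wᵀ = W := by simp [hW]
    have hSs : (Xᵀ * A * X)ᵀ = Xᵀ * A * X := by
      simp [Matrix.transpose_mul, Matrix.mul_assoc, hA.eq]
    simpa [Matrix.transpose_add, Matrix.transpose_smul, Matrix.transpose_sub,
      Matrix.transpose_mul, hMs, hWs, hSs] using this
  have hcomm : M * W = W * M := by
    have h3 : μ • (M * M - M * W) = μ • (M * M - W * M) := by
      have := h1.trans h2.symm
      exact add_left_cancel this
    have h4 : M * M - M * W = M * M - W * M := by
      have hμ' : μ ≠ 0 := ne_of_gt hμ
      exact smul_right_injective _ hμ' h3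
    have := sub_right_injective h4
    exact this
  intro i j hij
  have hij' : w i ≠ w j := fun h => hij (hw h)
  have := congrFun (congrFun hcomm i) j
  rw [hW] at this
  rw [Matrix.mul_diagonal, Matrix.diagonal_mul] at this
  have : M i j * (w j - w i) = 0 := by linarith [this]
  rcases mul_eq_zero.mp this with h | h
  · exact h
  · exact absurd (by linarith : w j = w i) hij'.symm
end

section
/- Let A be real symmetric, μ > 0, and W = diag(w₁,…,w_p) diagonal with distinct entries. If X is a stationary point of f(X) = (1/2)tr(XᵀAX) + (μ/4)‖XᵀX − W‖_F², then each nonzero column x_i of X satisfies A x_i = μ(w_i − x_iᵀx_i) x_i, i.e., x_i is an eigenvector of A with eigenvalue μ(w_i − ‖x_i‖²). -/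
open Matrix

/-- At a stationary point, each nonzero column `x_i` of `X` is an
eigenvector of `A` with eigenvalue `μ (w_i − ‖x_i‖²)`. -/
theorem stmt_1 {n p : ℕ}
    (A : Matrix (Fin n) (Fin n) ℝ) (hA : A.IsSymm)
    (μ : ℝ) (hμ : 0 < μ)
    (w : Fin p → ℝ) (hw : Function.Injective w)
    (X : Matrix (Fin n) (Fin p) ℝ)
    (hstat : A * X + μ • (X * (Xᵀ * X - Matrix.diagonal w)) = 0) :
    ∀ i : Fin p, (fun k => X k i) ≠ 0 →
      A *ᵥ (fun k => X k i) =
        (μ * (w i - (fun k => X k i) ⬝ᵥ (fun k => X k i))) • (fun k => X k i) := by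
  intro i _
  set S := Xᵀ * X with hS
  set D := Matrix.diagonal w with hD
  have hSsymm : Sᵀ = S := by rw [hS, transpose_mul, transpose_transpose]
  have hAX : A * X = (-μ) • (X * (S - D)) := by
    rw [add_eq_zero_iff_eq_neg] at hstat
    rw [hstat, neg_smul]
  -- S commutes with D
  have hcomm : S * (S - D) = (S - D) * S := by
    have h1 : Xᵀ * (A * X) = (-μ) • (S * (S - D)) := by
      rw [hAX, Matrix.mul_smul, ← Matrix.mul_assoc]
    have h2 : (Xᵀ * (A * X))ᵀ = Xᵀ * (A * X) := by
      rw [← Matrix.mul_assoc, transpose_mul, transpose_mul, transpose_transpose,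
        hA.eq, Matrix.mul_assoc]
    rw [h1, transpose_smul, transpose_mul, transpose_sub, hSsymm, hD,
      diagonal_transpose, ← hD] at h2
    have hne : (-μ) ≠ 0 := neg_ne_zero.mpr (ne_of_gt hμ)
    exact (smul_right_injective _ hne h2).symm
  have hSD : S * D = D * S := by
    have h := hcomm
    rw [Matrix.mul_sub, Matrix.sub_mul] at h
    exact sub_right_inj.mp h
  have hoff : ∀ j, j ≠ i → S j i = 0 := by
    intro j hj
    have h := congrFun (congrFun hSD j) i
    rw [Matrix.mul_diagonal, Matrix.diagonal_mul] at h
    have hwne : w i - w j ≠ 0 := sub_ne_zero.mpr fun hc => hj (hw hc.symm)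
    have : S j i * (w i - w j) = 0 := by ring_nf; linarith
    exact (mul_eq_zero.mp this).resolve_right hwne
  funext k
  have h := congrFun (congrFun hstat k) i
  have hXG : (X * (S - D)) k i
      = X k i * ((fun k => X k i) ⬝ᵥ (fun k => X k i) - w i) := by
    rw [Matrix.mul_apply]
    rw [Finset.sum_eq_single i]
    · have hSii : S i i = (fun k => X k i) ⬝ᵥ (fun k => X k i) := by
        simp [hS, Matrix.mul_apply, dotProduct, transpose_apply]
      simp [Matrix.sub_apply, hSii, hD, Matrix.diagonal_apply_eq]
    · intro j _ hj
      simp [Matrix.sub_apply, hoff j hj, hD, Matrix.diagonal_apply_ne _ hj]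
    · intro hi; exact absurd (Finset.mem_univ i) hi
  have hAXki : (A *ᵥ fun k => X k i) k = (A * X) k i := by
    simp [Matrix.mulVec, Matrix.mul_apply, dotProduct]
  simp only [Matrix.add_apply, Matrix.smul_apply, Matrix.zero_apply, smul_eq_mul,
    hXG] at h
  simp only [Pi.smul_apply, smul_eq_mul, hAXki]
  linarith
end

section
/- Under the assumptions of the weighted trace-penalty model, every stationary point X̂ has the form X̂ = Û_p Ŝ_p, where the columns û_i of Û_p are orthonormal eigenvectors of A with eigenvalues σ_i, and Ŝ_p = diag(ŝ₁,…,ŝ_p) with each ŝ_i ∈ {0, √(w_i − σ_i/μ)}. -/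
open Matrix

/-!
Multiplying the stationarity equation on the left by `Xᵀ` shows that `μ G (G - W)`, with
`G = XᵀX`, equals `-XᵀAX` and is therefore symmetric; hence `G` commutes with `W`, and as the
weights are distinct, `G` is diagonal. So the columns `x_j` of `X` are pairwise orthogonal, and the
stationarity equation becomes `A x_j = μ (w_j - ‖x_j‖²) x_j`. Normalising the nonzero columns gives
orthonormal eigenvectors with `ŝ_j = ‖x_j‖ = √(w_j - σ_j / μ)`. The zero columns are replaced by an
orthonormal eigenbasis of `A` on the orthogonal complement of the nonzero ones: that complement is
`A`-invariant, and since `p ≤ n` it is large enough.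
-/

open Module
open scoped InnerProductSpace

namespace LinearMap.IsSymmetric

variable {𝕜 E ι : Type*} [RCLike 𝕜] [NormedAddCommGroup E] [InnerProductSpace 𝕜 E]
  {T : E →ₗ[𝕜] E}

theorem exists_orthonormal_eigenvectors_extending [FiniteDimensional 𝕜 E] [Fintype ι]
    (hT : T.IsSymmetric) (hcard : Fintype.card ι ≤ finrank 𝕜 E) {s : Set ι} {v : ι → E}
    {c : ι → 𝕜} (hv : Orthonormal 𝕜 (fun i : s => v i)) (hvc : ∀ i ∈ s, T (v i) = c i • v i) :
    ∃ (u : ι → E) (c' : ι → 𝕜), Orthonormal 𝕜 u ∧ (∀ i, T (u i) = c' i • u i) ∧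
      Set.EqOn u v s ∧ Set.EqOn c' c s := by
  classical
  set K := Submodule.span 𝕜 (Set.range fun i : s => v i)
  have hK : ∀ x ∈ K, T x ∈ K := by
    refine (Submodule.span_le (p := K.comap T)).2 ?_
    rintro _ ⟨i, rfl⟩
    simp only [SetLike.mem_coe, Submodule.mem_comap, hvc i i.2]
    exact K.smul_mem _ (Submodule.subset_span ⟨i, rfl⟩)
  have hKperp : ∀ y ∈ Kᗮ, T y ∈ Kᗮ := fun y hy =>
    (Submodule.mem_orthogonal _ _).2 fun x hx => by
      rw [← hT]; exact Submodule.inner_right_of_mem_orthogonal (hK x hx) hy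
  have hcompl : Fintype.card (sᶜ : Set ι) ≤ finrank 𝕜 Kᗮ := by
    have hsum := K.finrank_add_finrank_orthogonal
    have hrankK : finrank 𝕜 K = Fintype.card s := finrank_span_eq_card hv.linearIndependent
    rw [Fintype.card_compl_set]
    omega
  obtain ⟨f⟩ : Nonempty ((sᶜ : Set ι) ↪ Fin (finrank 𝕜 Kᗮ)) :=
    Function.Embedding.nonempty_of_card_le (by rwa [Fintype.card_fin])
  have hT' := hT.restrict_invariant hKperp
  set b := hT'.eigenvectorBasis rfl
  refine ⟨fun i => if h : i ∈ s then v i else b (f ⟨i, h⟩),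
    fun i => if h : i ∈ s then c i else hT'.eigenvalues rfl (f ⟨i, h⟩), ?_, fun i => ?_,
    fun i hi => dif_pos hi, fun i hi => dif_pos hi⟩
  · rw [orthonormal_iff_ite]
    intro i j
    by_cases hi : i ∈ s <;> by_cases hj : j ∈ s <;> simp only [hi, hj, dite_true, dite_false]
    · simpa [Subtype.ext_iff] using orthonormal_iff_ite.mp hv ⟨i, hi⟩ ⟨j, hj⟩
    · rw [Submodule.inner_right_of_mem_orthogonal
        (Submodule.subset_span (Set.mem_range_self (⟨i, hi⟩ : s))) (b _).2,
        if_neg (ne_of_mem_of_not_mem hi hj)]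
    · rw [Submodule.inner_left_of_mem_orthogonal
        (Submodule.subset_span (Set.mem_range_self (⟨j, hj⟩ : s))) (b _).2,
        if_neg (ne_of_mem_of_not_mem hj hi).symm]
    · simp only [← Submodule.coe_inner, orthonormal_iff_ite.mp b.orthonormal, f.injective.eq_iff,
        Subtype.mk.injEq]
  · by_cases hi : i ∈ s
    · simp only [hi, dite_true, hvc i hi]
    · simp only [hi, dite_false]
      exact congrArg Subtype.val (hT'.apply_eigenvectorBasis rfl _)

theorem exists_orthonormal_eigenvectors_of_orthogonal [FiniteDimensional 𝕜 E] [Fintype ι]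
    (hT : T.IsSymmetric) (hcard : Fintype.card ι ≤ finrank 𝕜 E) {x : ι → E} {c : ι → 𝕜}
    (hx : Pairwise fun i j => ⟪x i, x j⟫_𝕜 = 0) (hxc : ∀ i, T (x i) = c i • x i) :
    ∃ (u : ι → E) (c' : ι → 𝕜), Orthonormal 𝕜 u ∧ (∀ i, T (u i) = c' i • u i) ∧
      (∀ i, x i = (‖x i‖ : 𝕜) • u i) ∧ ∀ i, x i ≠ 0 → c' i = c i := by
  set s : Set ι := {i | x i ≠ 0}
  have hv : Orthonormal 𝕜 (fun i : s => (‖x i‖⁻¹ : 𝕜) • x i) := by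
    refine ⟨fun i => norm_smul_inv_norm i.2, fun i j hij => ?_⟩
    simp only [inner_smul_left, inner_smul_right, hx (Subtype.coe_ne_coe.2 hij), mul_zero]
  obtain ⟨u, c', hu, huc, hus, hcs⟩ := hT.exists_orthonormal_eigenvectors_extending hcard
    (v := fun i => (‖x i‖⁻¹ : 𝕜) • x i) hv fun i _ => by rw [map_smul, hxc, smul_comm]
  refine ⟨u, c', hu, huc, fun i => ?_, fun i hi => hcs hi⟩
  by_cases hi : x i = 0
  · simp [hi]
  · rw [hus hi, smul_inv_smul₀ (by simpa using hi)]

end LinearMap.IsSymmetric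

namespace Matrix

variable {m p : Type*} [Fintype m]

theorem inner_toLp_col (X : Matrix m p ℝ) (i j : p) :
    ⟪WithLp.toLp 2 (X.col i), WithLp.toLp 2 (X.col j)⟫_ℝ = (Xᵀ * X) i j := by
  simp [EuclideanSpace.inner_toLp_toLp, dotProduct, mul_apply, mul_comm]

theorem transpose_mul_self_eq_one_iff_orthonormal [DecidableEq p] {U : Matrix m p ℝ} :
    Uᵀ * U = 1 ↔ Orthonormal ℝ fun j => WithLp.toLp 2 (U.col j) := by
  rw [orthonormal_iff_ite, ← Matrix.ext_iff]
  simp only [inner_toLp_col, one_apply]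

variable [Fintype p] [DecidableEq p]

theorem eq_diagonal_diag_of_commute_diagonal {R : Type*} [CommRing R] [NoZeroDivisors R]
    {M : Matrix p p R} {d : p → R} (hd : Function.Injective d) (h : Commute M (diagonal d)) :
    M = diagonal M.diag := by
  ext i j
  by_cases hij : i = j
  · simp [hij]
  · have hentry := congrFun (congrFun h.eq i) j
    rw [mul_diagonal, diagonal_mul] at hentry
    have : (d j - d i) * M i j = 0 := by linear_combination hentry
    rw [diagonal_apply_ne _ hij]
    exact (mul_eq_zero.1 this).resolve_left (sub_ne_zero.2 (hd.ne (Ne.symm hij)))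

theorem mulVec_col_of_mul_eq_mul_diagonal {R : Type*} [CommRing R] {A : Matrix m m R}
    {X : Matrix m p R} {σ : p → R} (h : A * X = X * diagonal σ) (j : p) :
    A *ᵥ X.col j = σ j • X.col j := by
  ext k
  have := congrFun (congrFun h k) j
  rw [mul_diagonal, mul_apply] at this
  simpa [mulVec, dotProduct, mul_comm (σ j)] using this

section Stationary

variable {K : Type*} [Field K] {A : Matrix m m K} {X : Matrix m p K} {μ : K} {w : p → K}

theorem commute_transpose_mul_self_diagonal_of_stationary (hA : A.IsSymm) (hμ : μ ≠ 0)
    (h : A * X + μ • (X * (Xᵀ * X - diagonal w)) = 0) : Commute (Xᵀ * X) (diagonal w) := by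
  set G := Xᵀ * X
  have hG : Gᵀ = G := by simp [G]
  have hsym : (Xᵀ * A * X)ᵀ = Xᵀ * A * X := by
    rw [transpose_mul, transpose_mul, hA.eq, transpose_transpose, Matrix.mul_assoc]
  have hXAX : μ • (G * (G - diagonal w)) = -(Xᵀ * A * X) := by
    have := congrArg (Xᵀ * ·) h
    simp only [Matrix.mul_add, Matrix.mul_smul, Matrix.mul_zero, ← Matrix.mul_assoc] at this
    exact eq_neg_of_add_eq_zero_right this
  have hswap : G * (G - diagonal w) = (G - diagonal w) * G := by
    apply smul_right_injective _ hμ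
    dsimp only
    rw [hXAX, ← hsym, ← transpose_neg, ← hXAX, transpose_smul, transpose_mul, transpose_sub, hG,
      diagonal_transpose]
  rw [Matrix.mul_sub, Matrix.sub_mul] at hswap
  exact sub_right_injective hswap

theorem mul_eq_mul_diagonal_of_stationary (hgram : Xᵀ * X = diagonal (Xᵀ * X).diag)
    (h : A * X + μ • (X * (Xᵀ * X - diagonal w)) = 0) :
    A * X = X * diagonal fun j => μ * (w j - (Xᵀ * X) j j) := by
  rw [hgram, diagonal_sub] at h
  ext k j
  have := congrFun (congrFun h k) j
  simp only [add_apply, smul_apply, mul_diagonal, zero_apply, smul_eq_mul,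
    diag_apply] at this ⊢
  linear_combination this

end Stationary

end Matrix

theorem stmt_2_general {n p : ℕ} (hpn : p < n)
    (A : Matrix (Fin n) (Fin n) ℝ) (hA : A.IsSymm)
    (μ : ℝ) (hμ : 0 < μ)
    (w : Fin p → ℝ) (hwanti : StrictAnti w)
    (X : Matrix (Fin n) (Fin p) ℝ)
    (hstat : A * X + μ • (X * (Xᵀ * X - Matrix.diagonal w)) = 0) :
    ∃ (U : Matrix (Fin n) (Fin p) ℝ) (σ s : Fin p → ℝ),
      (∀ i : Fin p, A *ᵥ (fun k => U k i) = σ i • (fun k => U k i)) ∧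
      Uᵀ * U = 1 ∧
      (∀ i : Fin p, s i = 0 ∨ s i = Real.sqrt (w i - σ i / μ)) ∧
      X = U * Matrix.diagonal s := by
  have hgram := eq_diagonal_diag_of_commute_diagonal hwanti.injective
    (commute_transpose_mul_self_diagonal_of_stationary hA hμ.ne' hstat)
  have heig := mul_eq_mul_diagonal_of_stationary hgram hstat
  set x : Fin p → EuclideanSpace ℝ (Fin n) := fun j => WithLp.toLp 2 (X.col j)
  have hT := isSymmetric_toEuclideanLin_iff.2 (isHermitian_iff_isSymm.2 hA)
  obtain ⟨u, σ, hu, huσ, hxu, hσ⟩ := hT.exists_orthonormal_eigenvectors_of_orthogonal (x := x)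
    (by simpa using hpn.le)
    (fun i j hij => by simp only [x, inner_toLp_col]; rw [hgram, diagonal_apply_ne _ hij])
    (fun j => congrArg (WithLp.toLp 2) (mulVec_col_of_mul_eq_mul_diagonal heig j))
  refine ⟨of fun k j => u j k, σ, fun j => ‖x j‖, fun j => ?_, ?_, fun j => ?_, ?_⟩
  · simpa using congrArg WithLp.ofLp (huσ j)
  · exact transpose_mul_self_eq_one_iff_orthonormal.2 hu
  · by_cases hxj : x j = 0
    · simp [hxj]
    · have hnorm : w j - σ j / μ = ‖x j‖ ^ 2 := by
        rw [hσ j hxj, ← real_inner_self_eq_norm_sq, inner_toLp_col]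
        field_simp
        ring
      rw [hnorm, Real.sqrt_sq (norm_nonneg _)]
      exact Or.inr rfl
  · ext k j
    simpa [x, mul_comm] using congrArg (· k) (hxu j)

/-- Every stationary point of the weighted trace-penalty objective
has the form `X̂ = Û_p Ŝ_p` with orthonormal eigenvector columns and
`ŝ_i ∈ {0, √(w_i − σ_i/μ)}`. -/
theorem stmt_2 {n p : ℕ} (hpn : p < n)
    (A : Matrix (Fin n) (Fin n) ℝ) (hA : A.IsSymm)
    (V : Matrix (Fin n) (Fin n) ℝ) (hV : Vᵀ * V = 1)
    (lam : Fin n → ℝ) (hAV : A = V * Matrix.diagonal lam * Vᵀ)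
    (hmono : Monotone lam)
    (hstrict : ∀ i j : Fin n, i < j → (j : ℕ) ≤ p → lam i < lam j)
    (μ : ℝ) (hμ : 0 < μ)
    (w : Fin p → ℝ) (hwanti : StrictAnti w)
    (hwlam : ∀ i : Fin p, lam (Fin.castLE hpn.le i) / μ < w i)
    (X : Matrix (Fin n) (Fin p) ℝ)
    (hstat : A * X + μ • (X * (Xᵀ * X - Matrix.diagonal w)) = 0) :
    ∃ (U : Matrix (Fin n) (Fin p) ℝ) (σ s : Fin p → ℝ),
      (∀ i : Fin p, A *ᵥ (fun k => U k i) = σ i • (fun k => U k i)) ∧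
      Uᵀ * U = 1 ∧
      (∀ i : Fin p, s i = 0 ∨ s i = Real.sqrt (w i - σ i / μ)) ∧
      X = U * Matrix.diagonal s :=
  stmt_2_general hpn A hA μ hμ w hwanti X hstat
end

section
/- Any global minimizer X* of f(X) = (1/2)tr(XᵀAX) + (μ/4)‖XᵀX − W‖_F² has the form X* = V_p S_p, where V_p = (v₁,…,v_p) consists of orthonormal eigenvectors of A for the p smallest eigenvalues λ₁ < ⋯ < λ_p, and S_p = diag(±s₁,…,±s_p) with s_i = √(w_i − λ_i/μ). -/
/-!
At a global minimizer `X` the gradient `A X + μ X (XᵀX - W)` vanishes. Since `XᵀAX` is symmetric,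
`XᵀX` commutes with `W`, whose entries are distinct, so the columns `xᵢ` are orthogonal and each
is an eigenvector, `A xᵢ = μ (wᵢ - ‖xᵢ‖²) xᵢ`. On matrices with orthogonal columns the objective
splits into a sum of column costs, so any family of orthogonal columns is a competitor and
columns can be exchanged one or two at a time.

By induction on `i`, column `i` is `±√(wᵢ - λᵢ/μ) vᵢ`. The earlier columns span `v₁, …, v_{i-1}`,
so `xᵢ` is orthogonal to them and its eigenvalue is at least `λᵢ`, i.e. `‖xᵢ‖² ≤ wᵢ - λᵢ/μ`.
If no other column has a component along `vᵢ`, replacing `xᵢ` by `√(wᵢ - λᵢ/μ) vᵢ` shows the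
reverse inequality. If some later column `x_l` is a multiple of `vᵢ`, moving `vᵢ` into column `i`
and a rescaled `xᵢ` into column `l` lowers the cost, because `w_l < wᵢ`.
-/

open Matrix

theorem eq_zero_of_forall_quartic_nonneg {a b c e : ℝ}
    (h : ∀ t : ℝ, 0 ≤ a * t + b * t ^ 2 + c * t ^ 3 + e * t ^ 4) : a = 0 := by
  have hmin : IsLocalMin (fun t : ℝ => a * t + b * t ^ 2 + c * t ^ 3 + e * t ^ 4) 0 :=
    Filter.Eventually.of_forall fun t => by simpa using h t
  have hq : HasDerivAt (fun t : ℝ => a * t + b * t ^ 2 + c * t ^ 3 + e * t ^ 4) a 0 :=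
    ((((hasDerivAt_id' 0).const_mul a).add ((hasDerivAt_pow 2 0).const_mul b)).add
      ((hasDerivAt_pow 3 0).const_mul c)).add ((hasDerivAt_pow 4 0).const_mul e) |>.congr_deriv
      (by simp)
  exact hq.deriv ▸ hmin.deriv_eq_zero

theorem Finset.sum_le_sum_of_eq_of_notMem {ι : Type*} [Fintype ι] [DecidableEq ι]
    {s : Finset ι} {f g : ι → ℝ} (h : ∑ j, f j ≤ ∑ j, g j) (hfg : ∀ j ∉ s, f j = g j) :
    ∑ j ∈ s, f j ≤ ∑ j ∈ s, g j := by
  rw [← Finset.sum_add_sum_compl s f, ← Finset.sum_add_sum_compl s g,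
    Finset.sum_congr rfl fun j hj => hfg j (Finset.mem_compl.1 hj)] at h
  linarith

/-- The exchange of columns `i` and `l` in terms of column costs. Before: squared norms `dᵢ`, `d_l`
with eigenvalues `μ (wᵢ - dᵢ)` and `μ (w_l - d_l) = μ (wᵢ - c)`. After: column `i` has squared
norm `c` and eigenvalue `μ (wᵢ - c)`, column `l` has eigenvalue `μ (wᵢ - dᵢ)` and the squared norm
`t` that is optimal for it. -/
theorem exchange_cost_lt {μ wi wl di dl c : ℝ} (hμ : 0 < μ) (hw : wl < wi) (hdi : 0 ≤ di)
    (hdl : 0 < dl) (hdc : di < c) (hc : wi - c = wl - dl) :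
    let t := max (wl - wi + di) 0
    μ * (wi - c) / 2 * c + μ / 4 * (c - wi) ^ 2 + (μ * (wi - di) / 2 * t + μ / 4 * (t - wl) ^ 2) <
      μ * (wi - di) / 2 * di + μ / 4 * (di - wi) ^ 2
        + (μ * (wl - dl) / 2 * dl + μ / 4 * (dl - wl) ^ 2) := by
  intro t
  have key : (t - (wl - wi + di)) ^ 2 < 2 * (wi - wl) * (c - di) := by
    rcases le_total (wl - wi + di) 0 with h | h
    · rw [show t = 0 from max_eq_right h]
      nlinarith
    · rw [show t = wl - wi + di from max_eq_left h]
      nlinarith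
  obtain rfl : dl = c - (wi - wl) := by linarith
  nlinarith

section Columns

variable {m ι : Type*} [Fintype m] [DecidableEq ι]

theorem transpose_mul_self_eq_diagonal {X : Matrix m ι ℝ}
    (hX : Pairwise fun a b => Xᵀ a ⬝ᵥ Xᵀ b = 0) :
    Xᵀ * X = diagonal fun j => Xᵀ j ⬝ᵥ Xᵀ j := by
  ext a b
  rcases eq_or_ne a b with rfl | hab
  · rw [diagonal_apply_eq]; rfl
  · rw [diagonal_apply_ne _ hab]; exact hX hab

theorem Set.Pairwise.dotProduct_update {s : Set ι} {u : ι → m → ℝ} {i : ι} {y : m → ℝ}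
    (hu : (s \ {i}).Pairwise fun j k => u j ⬝ᵥ u k = 0) (hy : ∀ j ∈ s, j ≠ i → y ⬝ᵥ u j = 0) :
    s.Pairwise fun j k => Function.update u i y j ⬝ᵥ Function.update u i y k = 0 := by
  intro j hj k hk hjk
  rcases eq_or_ne j i with rfl | hji
  · rw [Function.update_self, Function.update_of_ne hjk.symm]
    exact hy k hk hjk.symm
  rcases eq_or_ne k i with rfl | hki
  · rw [Function.update_self, Function.update_of_ne hji, dotProduct_comm]
    exact hy j hj hji
  rw [Function.update_of_ne hji, Function.update_of_ne hki]
  exact hu ⟨hj, hji⟩ ⟨hk, hki⟩ hjk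

theorem dotProduct_smul_self (r : ℝ) (v : m → ℝ) : (r • v) ⬝ᵥ (r • v) = r ^ 2 * (v ⬝ᵥ v) := by
  rw [smul_dotProduct, dotProduct_smul, smul_eq_mul, smul_eq_mul, ← mul_assoc, sq]

end Columns

theorem col_ne_zero_of_eigenvalue_eq {m ι : Type*} [Fintype m] {X : Matrix m ι ℝ} {μ : ℝ}
    {w : ι → ℝ} {i : ι} {κ : ℝ} (hwκ : κ < μ * w i)
    (hi : μ * (w i - Xᵀ i ⬝ᵥ Xᵀ i) = κ) : Xᵀ i ≠ 0 := by
  intro h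
  rw [h, dotProduct_zero, sub_zero] at hi
  exact hwκ.ne' hi

section TracePenalty

variable {m ι : Type*} [Fintype m] [Fintype ι] [DecidableEq ι]

noncomputable def tracePenalty (A : Matrix m m ℝ) (μ : ℝ) (w : ι → ℝ) (Y : Matrix m ι ℝ) : ℝ :=
  (1 / 2) * (Yᵀ * A * Y).trace +
    (μ / 4) * ((Yᵀ * Y - diagonal w)ᵀ * (Yᵀ * Y - diagonal w)).trace

noncomputable def tracePenaltyGrad (A : Matrix m m ℝ) (μ : ℝ) (w : ι → ℝ) (X : Matrix m ι ℝ) :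
    Matrix m ι ℝ :=
  A * X + μ • (X * (Xᵀ * X - diagonal w))

noncomputable def columnCost (A : Matrix m m ℝ) (μ ω : ℝ) (y : m → ℝ) : ℝ :=
  (1 / 2) * (y ⬝ᵥ A *ᵥ y) + (μ / 4) * (y ⬝ᵥ y - ω) ^ 2

variable {A : Matrix m m ℝ} {μ : ℝ} {w : ι → ℝ} {X : Matrix m ι ℝ}

theorem tracePenalty_add_smul (hA : A.IsSymm) (μ : ℝ) (w : ι → ℝ) (X E : Matrix m ι ℝ) :
    ∃ b c e : ℝ, ∀ t : ℝ, tracePenalty A μ w (X + t • E) = tracePenalty A μ w X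
      + (Eᵀ * tracePenaltyGrad A μ w X).trace * t + b * t ^ 2 + c * t ^ 3 + e * t ^ 4 := by
  set M := Xᵀ * X - diagonal w
  set N := Xᵀ * E + Eᵀ * X
  refine ⟨(1 / 2) * (Eᵀ * A * E).trace + (μ / 4) * ((N * N).trace + 2 * (M * (Eᵀ * E)).trace),
    (μ / 2) * (N * (Eᵀ * E)).trace, (μ / 4) * ((Eᵀ * E) * (Eᵀ * E)).trace, fun t => ?_⟩
  have hM : Mᵀ = M := by simp [M, transpose_sub]
  have hP : (X + t • E)ᵀ * (X + t • E) - diagonal w = M + t • N + t ^ 2 • (Eᵀ * E) := by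
    simp only [M, N, transpose_add, transpose_smul, Matrix.add_mul, Matrix.mul_add,
      Matrix.smul_mul, Matrix.mul_smul, smul_add, smul_smul]
    module
  have hPt : (M + t • N + t ^ 2 • (Eᵀ * E))ᵀ = M + t • N + t ^ 2 • (Eᵀ * E) := by
    simp [hM, N, transpose_mul, add_comm]
  have hXAE : (Xᵀ * A * E).trace = (Eᵀ * A * X).trace := by
    rw [← trace_transpose]; simp [transpose_mul, hA.eq, Matrix.mul_assoc]
  have hMN : (M * N).trace = 2 * (Eᵀ * (X * M)).trace := by
    have h₁ : (M * (Xᵀ * E)).trace = (Eᵀ * (X * M)).trace := by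
      rw [← trace_transpose]; simp [transpose_mul, hM, Matrix.mul_assoc]
    have h₂ : (M * (Eᵀ * X)).trace = (Eᵀ * (X * M)).trace := by
      rw [trace_mul_comm, Matrix.mul_assoc]
    rw [Matrix.mul_add, trace_add, h₁, h₂, two_mul]
  rw [tracePenalty, tracePenalty, tracePenaltyGrad, hP, hPt, ← hM]
  simp only [transpose_add, transpose_smul, Matrix.add_mul, Matrix.mul_add, Matrix.smul_mul,
    Matrix.mul_smul, trace_add, trace_smul, smul_eq_mul]
  rw [hXAE, trace_mul_comm N, trace_mul_comm (Eᵀ * E) N, trace_mul_comm (Eᵀ * E) Mᵀ, hM, hMN]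
  simp only [M, Matrix.mul_assoc]
  ring

theorem tracePenaltyGrad_eq_zero_of_isMin (hA : A.IsSymm)
    (hX : ∀ Y, tracePenalty A μ w X ≤ tracePenalty A μ w Y) : tracePenaltyGrad A μ w X = 0 := by
  set R := tracePenaltyGrad A μ w X
  obtain ⟨b, c, e, hline⟩ := tracePenalty_add_smul hA μ w X R
  have hR : (Rᵀ * R).trace = 0 := eq_zero_of_forall_quartic_nonneg (b := b) (c := c) (e := e)
    fun t => by linarith [hX (X + t • R), hline t]
  rw [← conjTranspose_eq_transpose_of_trivial] at hR
  exact trace_conjTranspose_mul_self_eq_zero_iff.1 hR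

theorem commute_gram_diagonal_of_tracePenaltyGrad_eq_zero (hA : A.IsSymm) (hμ : μ ≠ 0)
    (h : tracePenaltyGrad A μ w X = 0) : Commute (Xᵀ * X) (diagonal w) := by
  set G := Xᵀ * X
  have hXAX : Xᵀ * A * X = (-μ) • (G * (G - diagonal w)) := by
    rw [Matrix.mul_assoc, eq_neg_of_add_eq_zero_left h, neg_smul, Matrix.mul_neg, Matrix.mul_smul,
      ← Matrix.mul_assoc]
  have hsymm : (Xᵀ * A * X)ᵀ = Xᵀ * A * X := by
    simp [transpose_mul, hA.eq, Matrix.mul_assoc]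
  have hG : Gᵀ = G := by simp [G, transpose_mul]
  rw [hXAX, transpose_smul, transpose_mul, transpose_sub, diagonal_transpose, hG] at hsymm
  have := smul_right_injective _ (neg_ne_zero.2 hμ) hsymm
  rw [Matrix.sub_mul, Matrix.mul_sub] at this
  exact (sub_right_inj.1 this).symm

theorem pairwise_dotProduct_col_eq_zero_of_tracePenaltyGrad_eq_zero (hA : A.IsSymm) (hμ : μ ≠ 0)
    (hw : Function.Injective w) (h : tracePenaltyGrad A μ w X = 0) :
    Pairwise fun a b => Xᵀ a ⬝ᵥ Xᵀ b = 0 := by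
  intro a b hab
  have := congrFun (congrFun (commute_gram_diagonal_of_tracePenaltyGrad_eq_zero hA hμ h) a) b
  rw [mul_diagonal, diagonal_mul] at this
  change (Xᵀ a ⬝ᵥ Xᵀ b) * w b = w a * (Xᵀ a ⬝ᵥ Xᵀ b) at this
  have : (Xᵀ a ⬝ᵥ Xᵀ b) * (w b - w a) = 0 := by linear_combination this
  exact (mul_eq_zero.1 this).resolve_right (sub_ne_zero.2 (hw.ne hab.symm))

theorem mulVec_col_of_tracePenaltyGrad_eq_zero (hX : Pairwise fun a b => Xᵀ a ⬝ᵥ Xᵀ b = 0)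
    (h : tracePenaltyGrad A μ w X = 0) (j : ι) :
    A *ᵥ Xᵀ j = (μ * (w j - Xᵀ j ⬝ᵥ Xᵀ j)) • Xᵀ j := by
  ext k
  have := congrFun (congrFun h k) j
  rw [tracePenaltyGrad, transpose_mul_self_eq_diagonal hX, diagonal_sub] at this
  simp only [Matrix.add_apply, Matrix.smul_apply, mul_diagonal, smul_eq_mul,
    Matrix.zero_apply] at this
  change (A * X) k j = (μ * (w j - Xᵀ j ⬝ᵥ Xᵀ j)) * X k j
  linear_combination this

theorem tracePenalty_eq_sum_columnCost (A : Matrix m m ℝ) (μ : ℝ) (w : ι → ℝ)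
    {Y : Matrix m ι ℝ} (hY : Pairwise fun a b => Yᵀ a ⬝ᵥ Yᵀ b = 0) :
    tracePenalty A μ w Y = ∑ j, columnCost A μ (w j) (Yᵀ j) := by
  have hquad : (Yᵀ * A * Y).trace = ∑ j, Yᵀ j ⬝ᵥ A *ᵥ Yᵀ j := by
    simp only [trace, diag, Matrix.mul_assoc]
    rfl
  rw [tracePenalty, hquad, transpose_mul_self_eq_diagonal hY, diagonal_sub, diagonal_transpose,
    diagonal_mul_diagonal, trace_diagonal, Finset.mul_sum, Finset.mul_sum,
    ← Finset.sum_add_distrib]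
  simp only [columnCost, sq]

theorem columnCost_of_mulVec_eq_smul (μ ω : ℝ) {y : m → ℝ} {β : ℝ} (hy : A *ᵥ y = β • y) :
    columnCost A μ ω y = β / 2 * (y ⬝ᵥ y) + μ / 4 * (y ⬝ᵥ y - ω) ^ 2 := by
  rw [columnCost, hy, dotProduct_smul, smul_eq_mul]
  ring

theorem columnCost_smul_of_mulVec_eq_smul (μ ω r : ℝ) {y : m → ℝ} {β : ℝ}
    (hy : A *ᵥ y = β • y) :
    columnCost A μ ω (r • y) = β / 2 * (r ^ 2 * (y ⬝ᵥ y)) + μ / 4 * (r ^ 2 * (y ⬝ᵥ y) - ω) ^ 2 := by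
  rw [columnCost_of_mulVec_eq_smul μ ω (by rw [mulVec_smul, hy, smul_comm]),
    dotProduct_smul_self]

theorem sum_columnCost_le_of_isMin (hX : ∀ Y, tracePenalty A μ w X ≤ tracePenalty A μ w Y)
    (hXo : Pairwise fun a b => Xᵀ a ⬝ᵥ Xᵀ b = 0) {u : ι → m → ℝ}
    (hu : Pairwise fun a b => u a ⬝ᵥ u b = 0) :
    ∑ j, columnCost A μ (w j) (Xᵀ j) ≤ ∑ j, columnCost A μ (w j) (u j) := by
  have := hX (of u)ᵀ
  rwa [tracePenalty_eq_sum_columnCost A μ w hXo,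
    tracePenalty_eq_sum_columnCost A μ w (Y := (of u)ᵀ) hu] at this

theorem columnCost_le_of_isMin (hX : ∀ Y, tracePenalty A μ w X ≤ tracePenalty A μ w Y)
    (hXo : Pairwise fun a b => Xᵀ a ⬝ᵥ Xᵀ b = 0) {i : ι} {y : m → ℝ}
    (hy : ∀ j ≠ i, y ⬝ᵥ Xᵀ j = 0) :
    columnCost A μ (w i) (Xᵀ i) ≤ columnCost A μ (w i) y := by
  have hu := (hXo.set_pairwise _).dotProduct_update (s := Set.univ) (u := fun j => Xᵀ j)
    (i := i) (y := y) fun j _ hj => hy j hj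
  have := sum_columnCost_le_of_isMin hX hXo (Set.pairwise_univ.1 hu)
  simpa using Finset.sum_le_sum_of_eq_of_notMem (s := {i}) this fun j hj => by
    rw [Function.update_of_ne (Finset.notMem_singleton.1 hj)]

theorem columnCost_add_columnCost_le_of_isMin
    (hX : ∀ Y, tracePenalty A μ w X ≤ tracePenalty A μ w Y)
    (hXo : Pairwise fun a b => Xᵀ a ⬝ᵥ Xᵀ b = 0) {i l : ι} (hil : i ≠ l) {y z : m → ℝ}
    (hy : ∀ j ≠ i, j ≠ l → y ⬝ᵥ Xᵀ j = 0) (hz : ∀ j ≠ i, j ≠ l → z ⬝ᵥ Xᵀ j = 0)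
    (hzy : z ⬝ᵥ y = 0) :
    columnCost A μ (w i) (Xᵀ i) + columnCost A μ (w l) (Xᵀ l) ≤
      columnCost A μ (w i) y + columnCost A μ (w l) z := by
  have hu₁ := (hXo.set_pairwise _).dotProduct_update (s := Set.univ \ {l})
    (u := fun j => Xᵀ j) (i := i) (y := y) fun j hj hji => hy j hji hj.2
  have hu₂ := hu₁.dotProduct_update (s := Set.univ) (u := Function.update (fun j => Xᵀ j) i y)
    (i := l) (y := z) fun j _ hjl => by
      rcases eq_or_ne j i with rfl | hji
      · rwa [Function.update_self]
      · rw [Function.update_of_ne hji]; exact hz j hji hjl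
  have := sum_columnCost_le_of_isMin hX hXo (Set.pairwise_univ.1 (by simpa using hu₂))
  have hsum := Finset.sum_le_sum_of_eq_of_notMem (s := {i, l}) this fun j hj => by
    simp only [Finset.mem_insert, Finset.mem_singleton, not_or] at hj
    rw [Function.update_of_ne hj.2, Function.update_of_ne hj.1]
  simpa [Finset.sum_pair hil, Function.update_of_ne hil] using hsum

theorem eigenvalue_col_le_of_isMin (hμ : 0 < μ)
    (hX : ∀ Y, tracePenalty A μ w X ≤ tracePenalty A μ w Y)
    (hXo : Pairwise fun a b => Xᵀ a ⬝ᵥ Xᵀ b = 0)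
    (hXe : ∀ j, A *ᵥ Xᵀ j = (μ * (w j - Xᵀ j ⬝ᵥ Xᵀ j)) • Xᵀ j) {i l : ι} (hil : i ≠ l)
    (hw : w l < w i) {v : m → ℝ} (hv : v ⬝ᵥ v = 1) {κ : ℝ} (hAv : A *ᵥ v = κ • v)
    (hκ : κ < μ * w i) (hl : μ * (w l - Xᵀ l ⬝ᵥ Xᵀ l) = κ) (hl0 : 0 < Xᵀ l ⬝ᵥ Xᵀ l)
    (hperp : ∀ j ≠ l, v ⬝ᵥ Xᵀ j = 0) :
    μ * (w i - Xᵀ i ⬝ᵥ Xᵀ i) ≤ κ := by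
  by_contra! hlt
  set di := Xᵀ i ⬝ᵥ Xᵀ i
  set c := w i - κ / μ
  set t := max (w l - w i + di) 0
  have hκc : κ = μ * (w i - c) := by rw [sub_sub_cancel, mul_div_cancel₀ _ hμ.ne']
  have hc : 0 < c := sub_pos.2 ((div_lt_iff₀ hμ).2 (by linarith))
  have hdi : 0 ≤ di := Fintype.sum_nonneg fun k => mul_self_nonneg _
  -- `t / dᵢ` is a junk value when `dᵢ = 0`, but then `t = 0` as `w_l < wᵢ`.
  have htdi : √(t / di) ^ 2 * di = t := by
    rw [Real.sq_sqrt (by positivity)]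
    rcases hdi.eq_or_lt with h | h
    · rw [show t = 0 from max_eq_right (by linarith), zero_div, zero_mul]
    · exact div_mul_cancel₀ _ h.ne'
  have hcost := columnCost_add_columnCost_le_of_isMin hX hXo hil (y := √c • v)
    (z := √(t / di) • Xᵀ i) (fun j _ hjl => by rw [smul_dotProduct, hperp j hjl, smul_zero])
    (fun j hji _ => by rw [smul_dotProduct, hXo (Ne.symm hji), smul_zero])
    (by rw [smul_dotProduct, dotProduct_smul, dotProduct_comm, hperp i hil, smul_zero,
      smul_zero])
  rw [columnCost_of_mulVec_eq_smul _ _ (hXe i), columnCost_of_mulVec_eq_smul _ _ (hXe l),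
    columnCost_smul_of_mulVec_eq_smul _ _ _ hAv, columnCost_smul_of_mulVec_eq_smul _ _ _ (hXe i),
    hv, mul_one, htdi, Real.sq_sqrt hc.le, hκc] at hcost
  refine (exchange_cost_lt hμ hw hdi hl0 ?_ ?_).not_ge hcost
  · nlinarith
  · linarith [mul_left_cancel₀ hμ.ne' (hκc.symm.trans hl.symm)]

end TracePenalty

section Spectral

variable {n : Type*} [Fintype n]

theorem Matrix.IsSymm.dotProduct_eq_zero_of_mulVec_eq_smul {A : Matrix n n ℝ} (hA : A.IsSymm)
    {u v : n → ℝ} {α β : ℝ} (hu : A *ᵥ u = α • u) (hv : A *ᵥ v = β • v) (hαβ : α ≠ β) :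
    u ⬝ᵥ v = 0 := by
  have hsymm : u ⬝ᵥ A *ᵥ v = A *ᵥ u ⬝ᵥ v := by
    rw [dotProduct_mulVec, ← vecMul_transpose, hA.eq]
  rw [hu, hv, dotProduct_smul, smul_dotProduct, smul_eq_mul, smul_eq_mul] at hsymm
  exact (mul_eq_zero.1 (by linear_combination -hsymm : (α - β) * (u ⬝ᵥ v) = 0)).resolve_left
    (sub_ne_zero.2 hαβ)

variable [DecidableEq n] {A V : Matrix n n ℝ} {lam : n → ℝ}

structure IsOrthonormalEigenbasis (A V : Matrix n n ℝ) (lam : n → ℝ) : Prop where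
  transpose_mul_self : Vᵀ * V = 1
  mulVec_col : ∀ k, A *ᵥ Vᵀ k = lam k • Vᵀ k

namespace IsOrthonormalEigenbasis

theorem of_eq_mul_diagonal_mul_transpose (hV : Vᵀ * V = 1) (hAV : A = V * diagonal lam * Vᵀ) :
    IsOrthonormalEigenbasis A V lam where
  transpose_mul_self := hV
  mulVec_col k := by
    have hAV' : A * V = V * diagonal lam := by rw [hAV, Matrix.mul_assoc, hV, Matrix.mul_one]
    ext i
    have := congrFun (congrFun hAV' i) k
    rw [mul_diagonal] at this
    simp only [Pi.smul_apply, smul_eq_mul, transpose_apply]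
    rw [mul_comm, ← this]
    rfl

theorem dotProduct_col (hE : IsOrthonormalEigenbasis A V lam) (k k' : n) :
    Vᵀ k ⬝ᵥ Vᵀ k' = (1 : Matrix n n ℝ) k k' :=
  congrFun (congrFun hE.transpose_mul_self k) k'

theorem dotProduct_col_self (hE : IsOrthonormalEigenbasis A V lam) (k : n) : Vᵀ k ⬝ᵥ Vᵀ k = 1 := by
  rw [hE.dotProduct_col, one_apply_eq]

theorem eq_zero_of_forall_dotProduct_col_eq_zero (hE : IsOrthonormalEigenbasis A V lam)
    {u : n → ℝ} (hu : ∀ k, Vᵀ k ⬝ᵥ u = 0) : u = 0 := by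
  have hVu : Vᵀ *ᵥ u = 0 := funext hu
  rw [← one_mulVec u, ← mul_eq_one_comm.1 hE.transpose_mul_self, ← mulVec_mulVec, hVu,
    mulVec_zero]

theorem eq_smul_col_of_mulVec_eq_smul (hE : IsOrthonormalEigenbasis A V lam) (hA : A.IsSymm)
    {k : n} (hk : ∀ j ≠ k, lam j ≠ lam k) {u : n → ℝ} (hu : A *ᵥ u = lam k • u) :
    u = (Vᵀ k ⬝ᵥ u) • Vᵀ k := by
  refine sub_eq_zero.1 (hE.eq_zero_of_forall_dotProduct_col_eq_zero fun j => ?_)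
  rw [dotProduct_sub, dotProduct_smul, hE.dotProduct_col, smul_eq_mul]
  rcases eq_or_ne j k with rfl | hjk
  · simp
  · rw [one_apply_ne hjk, mul_zero, sub_zero]
    exact hA.dotProduct_eq_zero_of_mulVec_eq_smul (hE.mulVec_col j) hu (hk j hjk)

theorem le_of_mulVec_eq_smul [LinearOrder n] (hE : IsOrthonormalEigenbasis A V lam)
    (hA : A.IsSymm) (hlam : Monotone lam) {k : n} {u : n → ℝ} {ν : ℝ} (hu : A *ᵥ u = ν • u)
    (hu0 : u ≠ 0) (hlow : ∀ j < k, Vᵀ j ⬝ᵥ u = 0) : lam k ≤ ν := by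
  by_contra! hν
  refine hu0 (hE.eq_zero_of_forall_dotProduct_col_eq_zero fun j => ?_)
  rcases lt_or_ge j k with hjk | hkj
  · exact hlow j hjk
  · exact hA.dotProduct_eq_zero_of_mulVec_eq_smul (hE.mulVec_col j) hu
      (hν.trans_le (hlam hkj)).ne'

end IsOrthonormalEigenbasis

end Spectral

theorem lam_ne_lam_castLE {n p : ℕ} {lam : Fin n → ℝ} (hpn : p < n) (hlam : Monotone lam)
    (hstrict : ∀ i j : Fin n, i < j → (j : ℕ) ≤ p → lam i < lam j) (i : Fin p) (j : Fin n)
    (hj : j ≠ Fin.castLE hpn.le i) : lam j ≠ lam (Fin.castLE hpn.le i) := by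
  rcases hj.lt_or_gt with h | h
  · exact (hstrict _ _ h (by simp [i.isLt.le])).ne
  · have hij : (i : ℕ) < j := h
    have hnext : lam (Fin.castLE hpn.le i) < lam ⟨i + 1, by omega⟩ :=
      hstrict _ _ (by simp [Fin.lt_def]) i.isLt
    exact (hnext.trans_le (hlam (Fin.le_def.2 (by simp; omega)))).ne'

section SortedEigenbasis

variable {n p : ℕ} {A V : Matrix (Fin n) (Fin n) ℝ} {lam : Fin n → ℝ} {μ : ℝ} {w : Fin p → ℝ}
  {X : Matrix (Fin n) (Fin p) ℝ}

theorem col_eq_smul_of_eigenvalue_eq (hpn : p ≤ n) (hE : IsOrthonormalEigenbasis A V lam)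
    (hA : A.IsSymm)
    (hsimple : ∀ i : Fin p, ∀ j ≠ Fin.castLE hpn i, lam j ≠ lam (Fin.castLE hpn i))
    (hXe : ∀ j, A *ᵥ Xᵀ j = (μ * (w j - Xᵀ j ⬝ᵥ Xᵀ j)) • Xᵀ j) {i : Fin p}
    (hi : μ * (w i - Xᵀ i ⬝ᵥ Xᵀ i) = lam (Fin.castLE hpn i)) :
    Xᵀ i = (Vᵀ (Fin.castLE hpn i) ⬝ᵥ Xᵀ i) • Vᵀ (Fin.castLE hpn i) :=
  hE.eq_smul_col_of_mulVec_eq_smul hA (hsimple i) (hi ▸ hXe i)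

theorem lam_le_eigenvalue_col (hpn : p ≤ n) (hE : IsOrthonormalEigenbasis A V lam)
    (hA : A.IsSymm) (hlam : Monotone lam)
    (hsimple : ∀ i : Fin p, ∀ j ≠ Fin.castLE hpn i, lam j ≠ lam (Fin.castLE hpn i))
    (hwlam : ∀ i, lam (Fin.castLE hpn i) < μ * w i)
    (hXo : Pairwise fun a b => Xᵀ a ⬝ᵥ Xᵀ b = 0)
    (hXe : ∀ j, A *ᵥ Xᵀ j = (μ * (w j - Xᵀ j ⬝ᵥ Xᵀ j)) • Xᵀ j) {i : Fin p}
    (IH : ∀ m < i, μ * (w m - Xᵀ m ⬝ᵥ Xᵀ m) = lam (Fin.castLE hpn m)) :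
    lam (Fin.castLE hpn i) ≤ μ * (w i - Xᵀ i ⬝ᵥ Xᵀ i) := by
  by_cases hx : Xᵀ i = 0
  · simp [hx, (hwlam i).le]
  refine hE.le_of_mulVec_eq_smul hA hlam (hXe i) hx fun k hk => ?_
  obtain ⟨m, rfl⟩ : ∃ m : Fin p, Fin.castLE hpn m = k :=
    ⟨⟨k, (Fin.lt_def.1 hk).trans i.isLt⟩, rfl⟩
  have hmi : m < i := (Fin.castLE_lt_castLE_iff hpn).1 hk
  have hxm := col_eq_smul_of_eigenvalue_eq hpn hE hA hsimple hXe (IH m hmi)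
  have hcoef : Vᵀ (Fin.castLE hpn m) ⬝ᵥ Xᵀ m ≠ 0 := fun h =>
    col_ne_zero_of_eigenvalue_eq (hwlam m) (IH m hmi) (by rw [hxm, h, zero_smul])
  have h0 : Xᵀ m ⬝ᵥ Xᵀ i = 0 := hXo hmi.ne
  rw [hxm, smul_dotProduct, smul_eq_mul] at h0
  exact (mul_eq_zero.1 h0).resolve_left hcoef

theorem dotProduct_col_eq_zero_of_isMin (hpn : p ≤ n) (hE : IsOrthonormalEigenbasis A V lam)
    (hA : A.IsSymm)
    (hsimple : ∀ i : Fin p, ∀ j ≠ Fin.castLE hpn i, lam j ≠ lam (Fin.castLE hpn i))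
    (hμ : 0 < μ) (hw : StrictAnti w) (hwlam : ∀ i, lam (Fin.castLE hpn i) < μ * w i)
    (hX : ∀ Y, tracePenalty A μ w X ≤ tracePenalty A μ w Y)
    (hXo : Pairwise fun a b => Xᵀ a ⬝ᵥ Xᵀ b = 0)
    (hXe : ∀ j, A *ᵥ Xᵀ j = (μ * (w j - Xᵀ j ⬝ᵥ Xᵀ j)) • Xᵀ j) {i : Fin p}
    (IH : ∀ m < i, μ * (w m - Xᵀ m ⬝ᵥ Xᵀ m) = lam (Fin.castLE hpn m))
    (hle : lam (Fin.castLE hpn i) ≤ μ * (w i - Xᵀ i ⬝ᵥ Xᵀ i)) {l : Fin p} (hli : l ≠ i) :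
    Vᵀ (Fin.castLE hpn i) ⬝ᵥ Xᵀ l = 0 := by
  set v := Vᵀ (Fin.castLE hpn i)
  by_contra hvl
  have hl : μ * (w l - Xᵀ l ⬝ᵥ Xᵀ l) = lam (Fin.castLE hpn i) := by
    by_contra h
    exact hvl (hA.dotProduct_eq_zero_of_mulVec_eq_smul (hE.mulVec_col _) (hXe l) (Ne.symm h))
  have hil : i < l := lt_of_le_of_ne (not_lt.1 fun hl' => hsimple i _
    ((Fin.castLE_injective hpn).ne hli) ((IH l hl').symm.trans hl)) hli.symm
  have hxl : Xᵀ l = (v ⬝ᵥ Xᵀ l) • v :=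
    hE.eq_smul_col_of_mulVec_eq_smul hA (hsimple i) (hl ▸ hXe l)
  have hl0 : 0 < Xᵀ l ⬝ᵥ Xᵀ l := by
    conv_rhs => rw [hxl]
    rw [dotProduct_smul_self, hE.dotProduct_col_self, mul_one]
    positivity
  have hperp : ∀ j ≠ l, v ⬝ᵥ Xᵀ j = 0 := fun j hj => by
    have h0 : Xᵀ j ⬝ᵥ Xᵀ l = 0 := hXo hj
    rw [hxl, dotProduct_smul, smul_eq_mul, dotProduct_comm (Xᵀ j)] at h0
    exact (mul_eq_zero.1 h0).resolve_left hvl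
  have hi := le_antisymm (eigenvalue_col_le_of_isMin hμ hX hXo hXe hil.ne (hw hil)
    (hE.dotProduct_col_self _) (hE.mulVec_col _) (hwlam i) hl hl0 hperp) hle
  have hxi := col_eq_smul_of_eigenvalue_eq hpn hE hA hsimple hXe hi
  rw [hperp i hli.symm, zero_smul] at hxi
  exact col_ne_zero_of_eigenvalue_eq (hwlam i) hi hxi

theorem eigenvalue_col_eq_of_isMin (hpn : p ≤ n) (hE : IsOrthonormalEigenbasis A V lam)
    (hA : A.IsSymm) (hlam : Monotone lam)
    (hsimple : ∀ i : Fin p, ∀ j ≠ Fin.castLE hpn i, lam j ≠ lam (Fin.castLE hpn i))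
    (hμ : 0 < μ) (hw : StrictAnti w) (hwlam : ∀ i, lam (Fin.castLE hpn i) < μ * w i)
    (hX : ∀ Y, tracePenalty A μ w X ≤ tracePenalty A μ w Y)
    (hXo : Pairwise fun a b => Xᵀ a ⬝ᵥ Xᵀ b = 0)
    (hXe : ∀ j, A *ᵥ Xᵀ j = (μ * (w j - Xᵀ j ⬝ᵥ Xᵀ j)) • Xᵀ j) (i : Fin p) :
    μ * (w i - Xᵀ i ⬝ᵥ Xᵀ i) = lam (Fin.castLE hpn i) := by
  induction i using WellFoundedLT.induction with
  | ind i IH =>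
  have hle := lam_le_eigenvalue_col hpn hE hA hlam hsimple hwlam hXo hXe IH
  have hperp := fun l (hl : l ≠ i) =>
    dotProduct_col_eq_zero_of_isMin hpn hE hA hsimple hμ hw hwlam hX hXo hXe IH hle hl
  set c := w i - lam (Fin.castLE hpn i) / μ
  have hκc : lam (Fin.castLE hpn i) = μ * (w i - c) := by
    rw [sub_sub_cancel, mul_div_cancel₀ _ hμ.ne']
  have hc : 0 < c := sub_pos.2 ((div_lt_iff₀ hμ).2 (by linarith [hwlam i]))
  have hdi : 0 ≤ Xᵀ i ⬝ᵥ Xᵀ i := Fintype.sum_nonneg fun k => mul_self_nonneg _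
  have hcost := columnCost_le_of_isMin hX hXo (y := √c • Vᵀ (Fin.castLE hpn i))
    fun j hj => by rw [smul_dotProduct, hperp j hj, smul_zero]
  rw [columnCost_of_mulVec_eq_smul _ _ (hXe i), columnCost_smul_of_mulVec_eq_smul _ _ _
    (hE.mulVec_col _), hE.dotProduct_col_self, mul_one, Real.sq_sqrt hc.le, hκc] at hcost
  rw [hκc] at hle ⊢
  have hdc : Xᵀ i ⬝ᵥ Xᵀ i ≤ c := by nlinarith
  have hsq : μ * ((c - Xᵀ i ⬝ᵥ Xᵀ i) * (c + Xᵀ i ⬝ᵥ Xᵀ i)) ≤ 0 := by linarith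
  have hcd : c ≤ Xᵀ i ⬝ᵥ Xᵀ i := by
    by_contra! h
    linarith [mul_pos hμ (mul_pos (sub_pos.2 h) (by linarith : 0 < c + Xᵀ i ⬝ᵥ Xᵀ i))]
  rw [le_antisymm hdc hcd]

end SortedEigenbasis

/-- Any global minimizer of the weighted trace-penalty objective has
the form `X* = V_p S_p`, columns being scaled eigenvectors for the `p` smallest
eigenvalues with scalings `±√(w_i − λ_i/μ)`. -/
theorem stmt_4 {n p : ℕ} (hpn : p < n)
    (A : Matrix (Fin n) (Fin n) ℝ) (hA : A.IsSymm)
    (V : Matrix (Fin n) (Fin n) ℝ) (hV : Vᵀ * V = 1)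
    (lam : Fin n → ℝ) (hAV : A = V * Matrix.diagonal lam * Vᵀ)
    (hmono : Monotone lam)
    (hstrict : ∀ i j : Fin n, i < j → (j : ℕ) ≤ p → lam i < lam j)
    (μ : ℝ) (hμ : 0 < μ)
    (w : Fin p → ℝ) (hwanti : StrictAnti w)
    (hwlam : ∀ i : Fin p, lam (Fin.castLE hpn.le i) / μ < w i)
    (X : Matrix (Fin n) (Fin p) ℝ)
    (hmin : ∀ Y : Matrix (Fin n) (Fin p) ℝ,
      (1 / 2) * (Xᵀ * A * X).trace +
        (μ / 4) * ((Xᵀ * X - Matrix.diagonal w)ᵀ * (Xᵀ * X - Matrix.diagonal w)).trace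
      ≤ (1 / 2) * (Yᵀ * A * Y).trace +
        (μ / 4) * ((Yᵀ * Y - Matrix.diagonal w)ᵀ * (Yᵀ * Y - Matrix.diagonal w)).trace) :
    ∃ (Vp : Matrix (Fin n) (Fin p) ℝ) (s : Fin p → ℝ),
      Vpᵀ * Vp = 1 ∧
      (∀ i : Fin p, A *ᵥ (fun k => Vp k i) =
        lam (Fin.castLE hpn.le i) • (fun k => Vp k i)) ∧
      (∀ i : Fin p, s i = Real.sqrt (w i - lam (Fin.castLE hpn.le i) / μ) ∨
        s i = -Real.sqrt (w i - lam (Fin.castLE hpn.le i) / μ)) ∧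
      X = Vp * Matrix.diagonal s := by
  have hE := IsOrthonormalEigenbasis.of_eq_mul_diagonal_mul_transpose hV hAV
  have hsimple := lam_ne_lam_castLE hpn hmono hstrict
  have hwlam' i : lam (Fin.castLE hpn.le i) < μ * w i := (div_lt_iff₀' hμ).1 (hwlam i)
  have hgrad := tracePenaltyGrad_eq_zero_of_isMin hA hmin
  have hXo :=
    pairwise_dotProduct_col_eq_zero_of_tracePenaltyGrad_eq_zero hA hμ.ne' hwanti.injective hgrad
  have hXe := mulVec_col_of_tracePenaltyGrad_eq_zero hXo hgrad
  have hν := eigenvalue_col_eq_of_isMin hpn.le hE hA hmono hsimple hμ hwanti hwlam' hmin hXo hXe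
  have hX i := col_eq_smul_of_eigenvalue_eq hpn.le hE hA hsimple hXe (hν i)
  refine ⟨V.submatrix id (Fin.castLE hpn.le), fun i => Vᵀ (Fin.castLE hpn.le i) ⬝ᵥ Xᵀ i,
    ?_, fun i => hE.mulVec_col _, fun i => ?_, ?_⟩
  · rw [transpose_submatrix, ← submatrix_mul _ _ _ id _ Function.bijective_id, hV,
      submatrix_one _ (Fin.castLE_injective _)]
  · have hd : Xᵀ i ⬝ᵥ Xᵀ i = (Vᵀ (Fin.castLE hpn.le i) ⬝ᵥ Xᵀ i) ^ 2 := by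
      conv_lhs => rw [hX i]
      rw [dotProduct_smul_self, hE.dotProduct_col_self, mul_one]
    refine sq_eq_sq_iff_eq_or_eq_neg.1 ?_
    dsimp only
    rw [Real.sq_sqrt (sub_nonneg.2 (hwlam i).le), ← hd]
    field_simp
    linarith [hν i]
  · ext k j
    rw [mul_diagonal, mul_comm]
    exact congrFun (hX j) k
end

section
/- Let X̂ = Û_p Ŝ_p be a full-rank stationary point of f that is not a global minimizer (so all ŝ_i ≠ 0, the σ_i are eigenvalues of A, and there exist indices i ≤ p and j with λ_i < σ_j and v_i ⊥ range(Û_p)). Then taking Z with j-th column v_i and zero elsewhere gives tr(Zᵀ Hess f(X̂)[Z]) = λ_i − σ_j < 0; hence X̂ is a strict saddle point. -/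
open Matrix

/-! For `X = U diag(s)` with orthonormal `U`, the Gram matrix `XᵀX` is `diag(s²)`. Perturbing
only the `j`-th column along a unit eigenvector `v ⊥ range X` kills the two cross terms of the
Hessian, since `vᵀX = 0`, and leaves `vᵀAv + μ (s_j² - w_j) = λ + μ (s_j² - w_j)`. The relation
`s_j² = w_j - σ_j / μ` satisfied at a stationary point turns this into `λ - σ_j`. -/

namespace Matrix

variable {R : Type*} [CommRing R] {l m n : Type*} [DecidableEq n]

def singleCol (j : n) (v : m → R) : Matrix m n R :=
  of fun k c => if c = j then v k else 0

@[simp]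
theorem singleCol_zero (j : n) : singleCol j (0 : m → R) = 0 := by
  ext k c
  simp [singleCol]

theorem mul_singleCol [Fintype m] (M : Matrix l m R) (j : n) (v : m → R) :
    M * singleCol j v = singleCol j (M *ᵥ v) := by
  ext k c
  by_cases hc : c = j <;> simp [singleCol, mul_apply, mulVec, dotProduct, hc]

theorem singleCol_mul_diagonal [Fintype n] (j : n) (v : m → R) (d : n → R) :
    singleCol j v * diagonal d = singleCol j (d j • v) := by
  ext k c
  by_cases hc : c = j <;> simp [singleCol, hc, mul_comm]

theorem transpose_singleCol_mul [Fintype m] (j : n) (v : m → R) {o : Type*} (Y : Matrix m o R) :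
    (singleCol j v)ᵀ * Y = (singleCol j (v ᵥ* Y))ᵀ := by
  ext c o
  by_cases hc : c = j <;> simp [singleCol, mul_apply, vecMul, dotProduct, hc]

theorem trace_transpose_singleCol_mul_singleCol [Fintype m] [Fintype n] (j : n) (v u : m → R) :
    ((singleCol j v)ᵀ * singleCol j u).trace = v ⬝ᵥ u := by
  rw [trace, Finset.sum_eq_single j (fun c _ hc => by simp [singleCol, mul_apply, hc])
    (by simp)]
  simp [singleCol, mul_apply, dotProduct]

/-- The Hessian of `X ↦ ½ tr(XᵀAX) + (μ/4) ‖XᵀX - diag w‖²` at `X`, applied to `Z`. -/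
def hessian [Fintype m] [Fintype n] (A : Matrix m m R) (μ : R) (w : n → R) (X Z : Matrix m n R) :
    Matrix m n R :=
  A * Z + μ • (Z * (Xᵀ * X) + X * (Zᵀ * X) + X * (Xᵀ * Z) - Z * diagonal w)

theorem trace_transpose_singleCol_mul_hessian [Fintype m] [Fintype n] {A : Matrix m m R} {μ : R}
    {w : n → R} {X : Matrix m n R} {d : n → R} (hX : Xᵀ * X = diagonal d) {v : m → R} {lam : R}
    (hv : A *ᵥ v = lam • v) (hvunit : v ⬝ᵥ v = 1) (hvX : v ᵥ* X = 0) (j : n) :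
    ((singleCol j v)ᵀ * hessian A μ w X (singleCol j v)).trace = lam + μ * (d j - w j) := by
  have hZX : (singleCol j v)ᵀ * X = 0 := by
    rw [transpose_singleCol_mul, hvX, singleCol_zero, transpose_zero]
  have hXZ : Xᵀ * singleCol j v = 0 := by
    rw [← transpose_transpose (Xᵀ * singleCol j v), transpose_mul, transpose_transpose, hZX,
      transpose_zero]
  simp only [hessian, hZX, hXZ, hX, Matrix.mul_zero, add_zero, mul_singleCol A,
    singleCol_mul_diagonal, hv, Matrix.mul_add, Matrix.mul_sub, Matrix.mul_smul, trace_add,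
    trace_sub, trace_smul, trace_transpose_singleCol_mul_singleCol, dotProduct_smul, hvunit,
    smul_eq_mul]
  ring

theorem transpose_mul_self_of_orthonormal [Fintype m] [Fintype n] {U : Matrix m n R}
    (hU : Uᵀ * U = 1) (s : n → R) :
    (U * diagonal s)ᵀ * (U * diagonal s) = diagonal (s * s) := by
  rw [transpose_mul, diagonal_transpose, Matrix.mul_assoc, ← Matrix.mul_assoc Uᵀ, hU,
    Matrix.one_mul, diagonal_mul_diagonal]
  rfl

end Matrix

theorem stmt_8_general {n p : ℕ}
    (A : Matrix (Fin n) (Fin n) ℝ)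
    (μ : ℝ) (hμ : 0 < μ)
    (w : Fin p → ℝ)
    (U : Matrix (Fin n) (Fin p) ℝ) (σ s : Fin p → ℝ)
    (horth : Uᵀ * U = 1)
    (hs : ∀ m : Fin p, (s m) ^ 2 = w m - σ m / μ)
    (X : Matrix (Fin n) (Fin p) ℝ) (hX : X = U * Matrix.diagonal s)
    (v : Fin n → ℝ) (hvunit : v ⬝ᵥ v = 1)
    (lami : ℝ) (hv : A *ᵥ v = lami • v)
    (hvperp : ∀ m : Fin p, v ⬝ᵥ (fun k => X k m) = 0)
    (j : Fin p) (hlt : lami < σ j) :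
    (Matrix.of (fun k (m : Fin p) => if m = j then v k else 0)ᵀ *
        (A * Matrix.of (fun k (m : Fin p) => if m = j then v k else 0)
          + μ • (Matrix.of (fun k (m : Fin p) => if m = j then v k else 0) * (Xᵀ * X)
            + X * ((Matrix.of (fun k (m : Fin p) => if m = j then v k else 0))ᵀ * X)
            + X * (Xᵀ * Matrix.of (fun k (m : Fin p) => if m = j then v k else 0))
            - Matrix.of (fun k (m : Fin p) => if m = j then v k else 0)
              * Matrix.diagonal w))).trace
      = lami - σ j ∧ lami - σ j < 0 := by
  have hgram : Xᵀ * X = diagonal (s * s) := hX ▸ transpose_mul_self_of_orthonormal horth s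
  have hform := trace_transpose_singleCol_mul_hessian (μ := μ) (w := w) hgram hv hvunit
    (funext hvperp) j
  have hsj : s j * s j - w j = -(σ j / μ) := by linarith [hs j, sq (s j)]
  refine ⟨?_, sub_neg.mpr hlt⟩
  change ((singleCol j v)ᵀ * hessian A μ w X (singleCol j v)).trace = _
  rw [hform, Pi.mul_apply, hsj, mul_neg, mul_div_cancel₀ _ hμ.ne', sub_eq_add_neg]

/-- At a full-rank stationary point `X̂ = Û_p Ŝ_p` that is not a
global minimizer, the direction `Z` with `j`-th column `v_i` (a unit eigenvector
with eigenvalue `λ_i < σ_j`, orthogonal to the columns of `X̂`) gives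
`tr(Zᵀ Hess f(X̂)[Z]) = λ_i − σ_j < 0`, so `X̂` is a strict saddle point. -/
theorem stmt_8 {n p : ℕ}
    (A : Matrix (Fin n) (Fin n) ℝ) (hA : A.IsSymm)
    (μ : ℝ) (hμ : 0 < μ)
    (w : Fin p → ℝ)
    (U : Matrix (Fin n) (Fin p) ℝ) (σ s : Fin p → ℝ)
    (horth : Uᵀ * U = 1)
    (hU : ∀ m : Fin p, A *ᵥ (fun k => U k m) = σ m • (fun k => U k m))
    (hsne : ∀ m : Fin p, s m ≠ 0)
    (hs : ∀ m : Fin p, (s m) ^ 2 = w m - σ m / μ)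
    (X : Matrix (Fin n) (Fin p) ℝ) (hX : X = U * Matrix.diagonal s)
    (hstat : A * X + μ • (X * (Xᵀ * X - Matrix.diagonal w)) = 0)
    (v : Fin n → ℝ) (hvunit : v ⬝ᵥ v = 1)
    (lami : ℝ) (hv : A *ᵥ v = lami • v)
    (hvperp : ∀ m : Fin p, v ⬝ᵥ (fun k => X k m) = 0)
    (j : Fin p) (hlt : lami < σ j) :
    (Matrix.of (fun k (m : Fin p) => if m = j then v k else 0)ᵀ *
        (A * Matrix.of (fun k (m : Fin p) => if m = j then v k else 0)
          + μ • (Matrix.of (fun k (m : Fin p) => if m = j then v k else 0) * (Xᵀ * X)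
            + X * ((Matrix.of (fun k (m : Fin p) => if m = j then v k else 0))ᵀ * X)
            + X * (Xᵀ * Matrix.of (fun k (m : Fin p) => if m = j then v k else 0))
            - Matrix.of (fun k (m : Fin p) => if m = j then v k else 0)
              * Matrix.diagonal w))).trace
      = lami - σ j ∧ lami - σ j < 0 :=
  stmt_8_general A μ hμ w U σ s horth hs X hX v hvunit lami hv hvperp j hlt
end

section
/- Let X̂ be a rank-deficient stationary point of f with j-th column zero, and let v_i be a unit eigenvector of A with eigenvalue λ_i ≤ λ_p satisfying v_iᵀ X̂ = 0. Then for Z with j-th column v_i and zero elsewhere, tr(Zᵀ Hess f(X̂)[Z]) = λ_i − μ w_j < 0; hence every rank-deficient stationary point is a strict saddle point. -/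
open Matrix

/-- At a rank-deficient stationary point `X̂` with zero `j`-th
column, the direction `Z` with `j`-th column a unit eigenvector `v_i`
(eigenvalue `λ_i < μ w_j`, orthogonal to the columns of `X̂`) gives
`tr(Zᵀ Hess f(X̂)[Z]) = λ_i − μ w_j < 0`, so `X̂` is a strict saddle point. -/
theorem stmt_9 {n p : ℕ}
    (A : Matrix (Fin n) (Fin n) ℝ) (hA : A.IsSymm)
    (μ : ℝ) (hμ : 0 < μ)
    (w : Fin p → ℝ)
    (X : Matrix (Fin n) (Fin p) ℝ)
    (hstat : A * X + μ • (X * (Xᵀ * X - Matrix.diagonal w)) = 0)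
    (j : Fin p) (hcol : ∀ k : Fin n, X k j = 0)
    (v : Fin n → ℝ) (hvunit : v ⬝ᵥ v = 1)
    (lami : ℝ) (hv : A *ᵥ v = lami • v)
    (hvperp : ∀ m : Fin p, v ⬝ᵥ (fun k => X k m) = 0)
    (hlt : lami < μ * w j) :
    (Matrix.of (fun k (m : Fin p) => if m = j then v k else 0)ᵀ *
        (A * Matrix.of (fun k (m : Fin p) => if m = j then v k else 0)
          + μ • (Matrix.of (fun k (m : Fin p) => if m = j then v k else 0) * (Xᵀ * X)
            + X * ((Matrix.of (fun k (m : Fin p) => if m = j then v k else 0))ᵀ * X)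
            + X * (Xᵀ * Matrix.of (fun k (m : Fin p) => if m = j then v k else 0))
            - Matrix.of (fun k (m : Fin p) => if m = j then v k else 0)
              * Matrix.diagonal w))).trace
      = lami - μ * w j ∧ lami - μ * w j < 0 := by
  set Z : Matrix (Fin n) (Fin p) ℝ :=
    Matrix.of (fun k (m : Fin p) => if m = j then v k else 0) with hZ
  have hvv : ∑ k, v k * v k = 1 := hvunit
  have hZX : Zᵀ * X = 0 := by
    ext m m'
    by_cases h : m = j <;>
      simp [hZ, Matrix.mul_apply, h]
    exact hvperp m'
  have hZZ : Zᵀ * Z = Matrix.single j j (1 : ℝ) := by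
    ext a b
    by_cases ha : a = j <;> by_cases hb : b = j
    · subst ha; subst hb
      simp [hZ, Matrix.mul_apply, Matrix.single, hvv]
    · simp [hZ, Matrix.mul_apply, Matrix.single, ha, hb, Ne.symm hb]
    · simp [hZ, Matrix.mul_apply, Matrix.single, ha, hb, Ne.symm ha]
    · simp [hZ, Matrix.mul_apply, Matrix.single, ha, hb, Ne.symm ha, Ne.symm hb]
  have key : ∀ M : Matrix (Fin p) (Fin p) ℝ, (Zᵀ * (Z * M)).trace = M j j := by
    intro M
    rw [← Matrix.mul_assoc, hZZ]
    have h : ∀ x, (∑ y, (if j = x ∧ j = y then (1:ℝ) else 0) * M y x)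
        = if j = x then M j x else 0 := by
      intro x
      by_cases h : j = x <;> simp [h]
    simp only [Matrix.trace, Matrix.diag, Matrix.mul_apply, Matrix.single,
      Matrix.of_apply, h]
    simp
  have hAZ : A * Z = Matrix.of (fun k m => if m = j then lami * v k else 0) := by
    ext k m
    by_cases h : m = j <;> simp [hZ, Matrix.mul_apply, h]
    have := congrFun hv k
    simpa [Matrix.mulVec, dotProduct] using this
  have h1 : (Zᵀ * (A * Z)).trace = lami := by
    rw [hAZ]
    simp only [Matrix.trace, Matrix.diag, Matrix.mul_apply, Matrix.transpose_apply,
      Matrix.of_apply, hZ]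
    have h : ∀ m : Fin p, (∑ k, (if m = j then v k else 0) *
        (if m = j then lami * v k else 0)) = if m = j then lami else 0 := by
      intro m
      by_cases h : m = j <;> simp [h]
      rw [show (∑ k, v k * (lami * v k)) = lami * ∑ k, v k * v k by
        rw [Finset.mul_sum]; exact Finset.sum_congr rfl fun _ _ => by ring, hvv]
      ring
    simp [h]
    rw [show (∑ x, v x * (lami * v x)) = lami * ∑ k, v k * v k from
      by rw [Finset.mul_sum]; exact Finset.sum_congr rfl fun _ _ => by ring, hvv, mul_one]
  have h2 : (Zᵀ * (Z * (Xᵀ * X))).trace = 0 := by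
    rw [key]
    simp [Matrix.mul_apply, hcol]
  have h3 : (Zᵀ * (Z * Matrix.diagonal w)).trace = w j := by
    rw [key]; simp
  constructor
  · show (Zᵀ * (A * Z + μ • (Z * (Xᵀ * X) + X * (Zᵀ * X) + X * (Xᵀ * Z)
      - Z * Matrix.diagonal w))).trace = lami - μ * w j
    rw [Matrix.mul_add, Matrix.trace_add, h1, Matrix.mul_smul, Matrix.trace_smul,
      Matrix.mul_sub, Matrix.mul_add, Matrix.mul_add, hZX]
    have hXZ : Xᵀ * Z = (Zᵀ * X)ᵀ := by simp [Matrix.transpose_mul]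
    rw [hXZ, hZX]
    simp only [Matrix.mul_zero, Matrix.transpose_zero, Matrix.trace_sub, Matrix.trace_add,
      Matrix.trace_zero, h2, h3, add_zero, zero_add, zero_sub, smul_eq_mul]
    ring
  · linarith
end

section
/- The weighted trace-penalty objective f has no spurious local minima: every stationary point that is not of the form X* = V_p diag(±s₁,…,±s_p) with s_i = √(w_i − λ_i/μ) is a strict saddle point (its Hessian quadratic form takes strictly negative values). -/
open Matrix
noncomputable section
namespace Stmt10

variable {n p : ℕ}

def Zcol (a : Fin n → ℝ) (i : Fin p) : Matrix (Fin n) (Fin p) ℝ :=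
  Matrix.of fun k l => if l = i then a k else 0

lemma trace_Zcol_mul (a : Fin n → ℝ) (i : Fin p) (B : Matrix (Fin n) (Fin p) ℝ) :
    ((Zcol a i)ᵀ * B).trace = ∑ k, a k * B k i := by
  simp only [Matrix.trace, Matrix.diag, Matrix.mul_apply, Zcol, Matrix.transpose_apply,
    Matrix.of_apply]
  rw [Finset.sum_comm]
  simp [Finset.sum_ite_eq]

def xc (X : Matrix (Fin n) (Fin p) ℝ) (l : Fin p) : Fin n → ℝ := fun k => X k l

lemma entry_A_Zcol (A : Matrix (Fin n) (Fin n) ℝ) (b : Fin n → ℝ) (j i : Fin p) (k : Fin n) :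
    (A * Zcol b j) k i = if i = j then (A *ᵥ b) k else 0 := by
  simp only [Matrix.mul_apply, Zcol, Matrix.of_apply, Matrix.mulVec, dotProduct]
  by_cases h : i = j <;> simp [h, eq_comm]

lemma entry_Zcol_M (M : Matrix (Fin p) (Fin p) ℝ) (b : Fin n → ℝ) (j i : Fin p) (k : Fin n) :
    (Zcol b j * M) k i = b k * M j i := by
  simp [Matrix.mul_apply, Zcol, ite_mul, Finset.sum_ite_eq]

lemma entry_X_ZcolTX (X : Matrix (Fin n) (Fin p) ℝ) (b : Fin n → ℝ) (j i : Fin p) (k : Fin n) :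
    (X * ((Zcol b j)ᵀ * X)) k i = X k j * (b ⬝ᵥ xc X i) := by
  simp only [Matrix.mul_apply, Zcol, Matrix.transpose_apply, Matrix.of_apply, ite_mul, zero_mul,
    mul_ite, mul_zero, Finset.sum_ite_eq', Finset.mem_univ, if_true]
  simp [dotProduct, xc, Finset.mul_sum, mul_comm, mul_left_comm]

lemma entry_X_XTZcol (X : Matrix (Fin n) (Fin p) ℝ) (b : Fin n → ℝ) (j i : Fin p) (k : Fin n) :
    (X * (Xᵀ * Zcol b j)) k i = if i = j then ∑ l, X k l * (xc X l ⬝ᵥ b) else 0 := by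
  simp only [Matrix.mul_apply, Zcol, Matrix.transpose_apply, Matrix.of_apply, mul_ite, mul_zero]
  by_cases h : i = j <;> simp [h, dotProduct, xc, Finset.mul_sum]

lemma entry_Zcol_diag (wv : Fin p → ℝ) (b : Fin n → ℝ) (j i : Fin p) (k : Fin n) :
    (Zcol b j * Matrix.diagonal wv) k i = if i = j then b k * wv i else 0 := by
  simp only [Matrix.mul_apply, Zcol, Matrix.of_apply, Matrix.diagonal_apply, ite_mul, zero_mul,
    mul_ite, mul_zero]
  by_cases h : i = j
  · subst h; simp [Finset.sum_ite_eq]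
  · simp [h, Ne.symm h]

namespace T
variable (A : Matrix (Fin n) (Fin n) ℝ) (X : Matrix (Fin n) (Fin p) ℝ)
  (wv : Fin p → ℝ) (a b : Fin n → ℝ) (i j : Fin p)

lemma tr1 : ((Zcol a i)ᵀ * (A * Zcol b j)).trace = if i = j then a ⬝ᵥ (A *ᵥ b) else 0 := by
  rw [trace_Zcol_mul]
  simp only [entry_A_Zcol]
  by_cases h : i = j <;> simp [h, dotProduct]

lemma tr2 (M : Matrix (Fin p) (Fin p) ℝ) :
    ((Zcol a i)ᵀ * (Zcol b j * M)).trace = (a ⬝ᵥ b) * M j i := by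
  rw [trace_Zcol_mul]
  simp only [entry_Zcol_M]
  simp [dotProduct, Finset.sum_mul, mul_assoc]

lemma tr3 : ((Zcol a i)ᵀ * (X * ((Zcol b j)ᵀ * X))).trace
    = (a ⬝ᵥ xc X j) * (b ⬝ᵥ xc X i) := by
  rw [trace_Zcol_mul]
  simp only [entry_X_ZcolTX]
  simp [dotProduct, xc, Finset.sum_mul, mul_assoc]

lemma tr4 : ((Zcol a i)ᵀ * (X * (Xᵀ * Zcol b j))).trace
    = if i = j then ∑ l, (a ⬝ᵥ xc X l) * (xc X l ⬝ᵥ b) else 0 := by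
  rw [trace_Zcol_mul]
  simp only [entry_X_XTZcol]
  by_cases h : i = j
  · simp only [h, if_true, Finset.mul_sum]
    rw [Finset.sum_comm]
    simp [dotProduct, xc, Finset.sum_mul, mul_assoc]
  · simp [h]

lemma tr5 : ((Zcol a i)ᵀ * (Zcol b j * Matrix.diagonal wv)).trace
    = if i = j then (a ⬝ᵥ b) * wv i else 0 := by
  rw [trace_Zcol_mul]
  simp only [entry_Zcol_diag]
  by_cases h : i = j <;> simp [h, dotProduct, Finset.sum_mul, mul_assoc]

end T

variable {A : Matrix (Fin n) (Fin n) ℝ} {X : Matrix (Fin n) (Fin p) ℝ}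
  {wv : Fin p → ℝ} {μ : ℝ}

def Hq (A : Matrix (Fin n) (Fin n) ℝ) (X : Matrix (Fin n) (Fin p) ℝ) (wv : Fin p → ℝ)
    (μ : ℝ) (Z : Matrix (Fin n) (Fin p) ℝ) : Matrix (Fin n) (Fin p) ℝ :=
  A * Z + μ • (Z * (Xᵀ * X) + X * (Zᵀ * X) + X * (Xᵀ * Z) - Z * Matrix.diagonal wv)

lemma q_single (a b : Fin n → ℝ) (i j : Fin p) :
    ((Zcol a i)ᵀ * Hq A X wv μ (Zcol b j)).trace =
    (if i = j then a ⬝ᵥ (A *ᵥ b)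
        + μ * ((∑ l, (a ⬝ᵥ xc X l) * (xc X l ⬝ᵥ b)) - (a ⬝ᵥ b) * wv i) else 0)
      + μ * ((a ⬝ᵥ b) * (xc X j ⬝ᵥ xc X i) + (a ⬝ᵥ xc X j) * (b ⬝ᵥ xc X i)) := by
  unfold Hq
  rw [Matrix.mul_add, Matrix.trace_add, Matrix.mul_smul, Matrix.trace_smul]
  rw [Matrix.mul_sub, Matrix.mul_add, Matrix.mul_add, Matrix.trace_sub, Matrix.trace_add,
    Matrix.trace_add]
  rw [T.tr1, T.tr2, T.tr3, T.tr4, T.tr5]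
  have hXX : (Xᵀ * X) j i = xc X j ⬝ᵥ xc X i := by
    simp [Matrix.mul_apply, dotProduct, xc]
  rw [hXX]
  by_cases h : i = j <;> simp [h] <;> ring

lemma Hq_add (Z₁ Z₂ : Matrix (Fin n) (Fin p) ℝ) :
    Hq A X wv μ (Z₁ + Z₂) = Hq A X wv μ Z₁ + Hq A X wv μ Z₂ := by
  unfold Hq
  simp only [Matrix.mul_add, Matrix.add_mul, Matrix.transpose_add, smul_add]
  abel_nf
  simp [smul_sub, smul_add]
  abel

lemma q_add (Z₁ Z₂ : Matrix (Fin n) (Fin p) ℝ) :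
    ((Z₁ + Z₂)ᵀ * Hq A X wv μ (Z₁ + Z₂)).trace =
      (Z₁ᵀ * Hq A X wv μ Z₁).trace + (Z₁ᵀ * Hq A X wv μ Z₂).trace
      + (Z₂ᵀ * Hq A X wv μ Z₁).trace + (Z₂ᵀ * Hq A X wv μ Z₂).trace := by
  rw [Hq_add, Matrix.transpose_add, Matrix.add_mul, Matrix.mul_add, Matrix.mul_add,
    Matrix.trace_add, Matrix.trace_add, Matrix.trace_add]
  ring

lemma mul_sum_sum {N : ℕ} (f g : Fin N → ℝ) (e : Fin N → Fin n → ℝ) 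
    (huu2 : ∀ t s, e t ⬝ᵥ e s = if t = s then 1 else 0) :
    (∑ t, f t • e t) ⬝ᵥ (∑ s, g s • e s) = ∑ t, f t * g t := by
  simp only [dotProduct, Finset.sum_apply, Pi.smul_apply, smul_eq_mul]
  have step1 : ∀ k, (∑ t, f t * e t k) * (∑ s, g s * e s k)
      = ∑ t, ∑ s, (f t * e t k) * (g s * e s k) := fun k => Finset.sum_mul_sum _ _ _ _
  rw [Finset.sum_congr rfl (fun k _ => step1 k), Finset.sum_comm]
  apply Finset.sum_congr rfl
  intro t _
  rw [Finset.sum_comm]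
  have h2 : ∀ s, (∑ k, (f t * e t k) * (g s * e s k)) = f t * g s * (e t ⬝ᵥ e s) := by
    intro s
    simp only [dotProduct, Finset.mul_sum]
    exact Finset.sum_congr rfl (fun k _ => by ring)
  rw [Finset.sum_congr rfl (fun s _ => h2 s)]
  simp only [huu2]
  rw [Finset.sum_eq_single t] <;> simp +contextual [eq_comm]

lemma dot_sum_expand {N : ℕ} (y : Fin n → ℝ) (f : Fin N → ℝ) (e : Fin N → Fin n → ℝ) :
    y ⬝ᵥ (∑ t, f t • e t) = ∑ t, f t * (y ⬝ᵥ e t) := by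
  simp only [dotProduct, Finset.sum_apply, Pi.smul_apply, smul_eq_mul, Finset.mul_sum]
  rw [Finset.sum_comm]
  exact Finset.sum_congr rfl fun t _ => Finset.sum_congr rfl fun k _ => by ring

lemma exists_perp (A : Matrix (Fin n) (Fin n) ℝ) (lam : Fin n → ℝ) (hmono : Monotone lam)
    (u : Fin n → (Fin n → ℝ))
    (huu : ∀ t s, u t ⬝ᵥ u s = if t = s then 1 else 0)
    (hAu : ∀ t, A *ᵥ u t = lam t • u t)
    (x : Fin p → (Fin n → ℝ)) (r : ℕ) (hrn : r < n) (K : Finset (Fin p)) (hK : K.card ≤ r)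
    (hauto : ∀ l, l ∉ K → ∀ t : Fin n, (t : ℕ) ≤ r → x l ⬝ᵥ u t = 0) :
    ∃ v : Fin n → ℝ, 0 < v ⬝ᵥ v ∧ (∀ l, x l ⬝ᵥ v = 0) ∧
      v ⬝ᵥ (A *ᵥ v) ≤ lam ⟨r, hrn⟩ * (v ⬝ᵥ v) := by
  have hrn' : r + 1 ≤ n := hrn
  set e : Fin (r+1) → Fin n → ℝ := fun t => u (Fin.castLE hrn' t) with he
  have huu2 : ∀ t s, e t ⬝ᵥ e s = if t = s then 1 else 0 := by
    intro t s
    rw [he]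
    simp only [huu]
    by_cases h : t = s
    · simp [h]
    · have : Fin.castLE hrn' t ≠ Fin.castLE hrn' s := by
        simpa [Fin.ext_iff] using (fun hh => h (Fin.ext hh))
      simp [h, this]
  set G : Matrix K (Fin (r+1)) ℝ := Matrix.of (fun l t => x l.1 ⬝ᵥ e t) with hG
  have hni : ¬ Function.Injective G.mulVecLin := by
    intro hinj
    have h1 := LinearMap.finrank_le_finrank_of_injective hinj
    simp only [Module.finrank_pi, Fintype.card_fin, Fintype.card_coe] at h1
    omega
  rw [Function.not_injective_iff] at hni
  obtain ⟨c₁, c₂, hceq, hcne⟩ := hni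
  set c : Fin (r+1) → ℝ := c₁ - c₂ with hc
  have hc0 : G *ᵥ c = 0 := by
    have h2 : G.mulVecLin (c₁ - c₂) = 0 := by rw [map_sub, hceq, sub_self]
    simpa [Matrix.mulVecLin] using h2
  have hcne0 : c ≠ 0 := sub_ne_zero_of_ne hcne
  set v : Fin n → ℝ := ∑ t, c t • e t with hv
  have hvv : v ⬝ᵥ v = ∑ t, c t * c t := mul_sum_sum c c e huu2
  have hvvpos : 0 < v ⬝ᵥ v := by
    rw [hvv]
    obtain ⟨t0, ht0⟩ := Function.ne_iff.mp hcne0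
    exact Finset.sum_pos' (fun t _ => mul_self_nonneg _)
      ⟨t0, Finset.mem_univ _, mul_self_pos.mpr ht0⟩
  refine ⟨v, hvvpos, ?_, ?_⟩
  · intro l
    have hexp : x l ⬝ᵥ v = ∑ t, c t * (x l ⬝ᵥ e t) := dot_sum_expand (x l) c e
    by_cases hl : l ∈ K
    · have h1 : (G *ᵥ c) ⟨l, hl⟩ = ∑ t, c t * (x l ⬝ᵥ e t) := by
        simp [Matrix.mulVec, dotProduct, hG, mul_comm]
      rw [hexp, ← h1, hc0]
      rfl
    · rw [hexp]
      apply Finset.sum_eq_zero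
      intro t _
      rw [he]
      rw [hauto l hl _ (by simpa using Fin.is_le t)]
      ring
  · have hAv : A *ᵥ v = ∑ t, (c t * lam (Fin.castLE hrn' t)) • e t := by
      rw [hv, show A *ᵥ (∑ t, c t • e t) = A.mulVecLin (∑ t, c t • e t) from rfl, map_sum]
      apply Finset.sum_congr rfl
      intro t _
      rw [_root_.map_smul, Matrix.mulVecLin_apply, he, hAu, smul_smul, mul_comm]
    have hvAv : v ⬝ᵥ (A *ᵥ v) = ∑ t, c t * (c t * lam (Fin.castLE hrn' t)) := by
      rw [hAv, hv]
      exact mul_sum_sum c _ e huu2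
    rw [hvAv, hvv, Finset.mul_sum]
    apply Finset.sum_le_sum
    intro t _
    have hle : lam (Fin.castLE hrn' t) ≤ lam ⟨r, hrn⟩ :=
      hmono (by simpa [Fin.le_def] using Fin.is_le t)
    nlinarith [mul_self_nonneg (c t)]

lemma q_single_perp (A : Matrix (Fin n) (Fin n) ℝ) (X : Matrix (Fin n) (Fin p) ℝ)
    (wv : Fin p → ℝ) (μ : ℝ) (i : Fin p) (v : Fin n → ℝ)
    (hperp : ∀ l, xc X l ⬝ᵥ v = 0) :
    ((Zcol v i)ᵀ * Hq A X wv μ (Zcol v i)).trace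
      = v ⬝ᵥ (A *ᵥ v) + μ * ((xc X i ⬝ᵥ xc X i) - wv i) * (v ⬝ᵥ v) := by
  have hperp' : ∀ l, v ⬝ᵥ xc X l = 0 := fun l => by
    rw [dotProduct_comm]; exact hperp l
  rw [q_single]
  simp only [if_pos rfl, hperp, hperp']
  simp
  ring

lemma sum_restrict {N : ℕ} (hNn : N ≤ n) (f : Fin n → ℝ)
    (hvan : ∀ t : Fin n, N ≤ (t : ℕ) → f t = 0) :
    ∑ t : Fin n, f t = ∑ t : Fin N, f (Fin.castLE hNn t) := by
  set F : ℕ → ℝ := fun j => if h : j < n then f ⟨j, h⟩ else 0 with hF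
  have h1 : ∑ t : Fin n, f t = ∑ j ∈ Finset.range n, F j := by
    rw [← Fin.sum_univ_eq_sum_range]
    exact Finset.sum_congr rfl fun t _ => by simp [hF]
  have h2 : ∑ t : Fin N, f (Fin.castLE hNn t) = ∑ j ∈ Finset.range N, F j := by
    rw [← Fin.sum_univ_eq_sum_range]
    refine Finset.sum_congr rfl fun t _ => ?_
    have htn : (t : ℕ) < n := lt_of_lt_of_le t.isLt hNn
    rw [hF]
    simp only [htn, dif_pos]
    rfl
  rw [h1, h2]
  rw [← Finset.sum_subset (Finset.range_subset_range.mpr hNn)]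
  intro j hj hjN
  have hNj : N ≤ j := le_of_not_gt (fun hc => hjN (Finset.mem_range.mpr hc))
  have hjn : j < n := Finset.mem_range.mp hj
  rw [hF]
  simp only [hjn, dif_pos]
  exact hvan ⟨j, hjn⟩ hNj

lemma parseval (V : Matrix (Fin n) (Fin n) ℝ) (hVVt : V * Vᵀ = 1) (a b : Fin n → ℝ) :
    a ⬝ᵥ b = ∑ t, (a ⬝ᵥ (fun k => V k t)) * (b ⬝ᵥ (fun k => V k t)) := by
  have key : ∀ k k' : Fin n, (∑ t, V k t * V k' t) = if k = k' then 1 else 0 := by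
    intro k k'
    have h := congrFun (congrFun hVVt k) k'
    rw [Matrix.mul_apply] at h
    simpa [Matrix.one_apply, Matrix.transpose_apply] using h
  have step : ∀ t, (a ⬝ᵥ (fun k => V k t)) * (b ⬝ᵥ (fun k => V k t))
      = ∑ k, ∑ k', (a k * V k t) * (b k' * V k' t) := by
    intro t
    rw [← Finset.sum_mul_sum]
    rfl
  rw [Finset.sum_congr rfl (fun t _ => step t), Finset.sum_comm]
  have step2 : ∀ k, ∑ t, ∑ k', (a k * V k t) * (b k' * V k' t) = a k * b k := by
    intro k
    rw [Finset.sum_comm]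
    have h3 : ∀ k', ∑ t, (a k * V k t) * (b k' * V k' t)
        = a k * b k' * (∑ t, V k t * V k' t) := by
      intro k'
      rw [Finset.mul_sum]
      exact Finset.sum_congr rfl fun t _ => by ring
    rw [Finset.sum_congr rfl (fun k' _ => h3 k')]
    simp only [key]
    rw [Finset.sum_eq_single k] <;> simp +contextual [eq_comm]
  rw [Finset.sum_congr rfl (fun k _ => step2 k)]
  rfl

end Stmt10

set_option maxHeartbeats 2000000 in
open Stmt10 in
/-- No spurious local minima: every stationary point of the
weighted trace-penalty objective that is not of the global-minimizer form
`V_p diag(±s_i)` with `s_i = √(w_i − λ_i/μ)` is a strict saddle point. -/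
theorem stmt_10 {n p : ℕ} (hpn : p < n)
    (A : Matrix (Fin n) (Fin n) ℝ) (hA : A.IsSymm)
    (V : Matrix (Fin n) (Fin n) ℝ) (hV : Vᵀ * V = 1)
    (lam : Fin n → ℝ) (hAV : A = V * Matrix.diagonal lam * Vᵀ)
    (hmono : Monotone lam)
    (hstrict : ∀ i j : Fin n, i < j → (j : ℕ) ≤ p → lam i < lam j)
    (μ : ℝ) (hμ : 0 < μ)
    (w : Fin p → ℝ) (hwanti : StrictAnti w)
    (hwlam : ∀ i : Fin p, lam (Fin.castLE hpn.le i) / μ < w i)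
    (X : Matrix (Fin n) (Fin p) ℝ)
    (hstat : A * X + μ • (X * (Xᵀ * X - Matrix.diagonal w)) = 0)
    (hnotmin : ¬ ∃ (Vp : Matrix (Fin n) (Fin p) ℝ) (s : Fin p → ℝ),
      Vpᵀ * Vp = 1 ∧
      (∀ i : Fin p, A *ᵥ (fun k => Vp k i) =
        lam (Fin.castLE hpn.le i) • (fun k => Vp k i)) ∧
      (∀ i : Fin p, s i = Real.sqrt (w i - lam (Fin.castLE hpn.le i) / μ) ∨
        s i = -Real.sqrt (w i - lam (Fin.castLE hpn.le i) / μ)) ∧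
      X = Vp * Matrix.diagonal s) :
    ∃ Z : Matrix (Fin n) (Fin p) ℝ,
      (Zᵀ * (A * Z + μ • (Z * (Xᵀ * X) + X * (Zᵀ * X) + X * (Xᵀ * Z)
          - Z * Matrix.diagonal w))).trace < 0 := by
  classical
  have hgoal : ∀ Z : Matrix (Fin n) (Fin p) ℝ,
      A * Z + μ • (Z * (Xᵀ * X) + X * (Zᵀ * X) + X * (Xᵀ * Z) - Z * Matrix.diagonal w)
        = Hq A X w μ Z := fun Z => rfl
  rcases Nat.eq_zero_or_pos p with hp0 | hp0
  · exfalso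
    apply hnotmin
    subst hp0
    refine ⟨0, 0, Subsingleton.elim _ _, fun i => i.elim0, fun i => i.elim0,
      Subsingleton.elim _ _⟩
  have hAt : Aᵀ = A := hA
  have hμne : μ ≠ 0 := ne_of_gt hμ
  set M := Xᵀ * X with hM
  -- stationarity restated
  have hstat' : A * X = μ • (X * (Matrix.diagonal w - M)) := by
    have h := hstat
    rw [add_eq_zero_iff_eq_neg] at h
    rw [h, ← smul_neg, ← Matrix.mul_neg, neg_sub]
  have hsymM : Mᵀ = M := by
    rw [hM, Matrix.transpose_mul, Matrix.transpose_transpose]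
  -- M commutes with diagonal w
  have hcomm : M * Matrix.diagonal w = Matrix.diagonal w * M := by
    have h1 : Xᵀ * (A * X) = μ • (M * (Matrix.diagonal w - M)) := by
      rw [hstat', Matrix.mul_smul, ← Matrix.mul_assoc, hM]
    have h2 : (Xᵀ * (A * X))ᵀ = Xᵀ * (A * X) := by
      rw [Matrix.transpose_mul, Matrix.transpose_mul, Matrix.transpose_transpose, hAt,
        Matrix.mul_assoc]
    rw [h1, Matrix.transpose_smul, Matrix.transpose_mul, Matrix.transpose_sub,
      Matrix.diagonal_transpose, hsymM] at h2
    have h3 : (Matrix.diagonal w - M) * M = M * (Matrix.diagonal w - M) :=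
      smul_right_injective _ hμne h2
    rw [Matrix.sub_mul, Matrix.mul_sub] at h3
    exact (sub_left_inj.mp h3).symm
  -- M is diagonal
  have hMdiag : ∀ i j : Fin p, i ≠ j → M i j = 0 := by
    intro i j hij
    have h := congrFun (congrFun hcomm i) j
    rw [Matrix.mul_diagonal, Matrix.diagonal_mul] at h
    have hw : w j ≠ w i := fun hh => hij (hwanti.injective hh).symm
    have h5 : M i j * (w j - w i) = 0 := by ring_nf; linarith [h]
    rcases mul_eq_zero.mp h5 with h6 | h6
    · exact h6
    · exact absurd (by linarith : w j = w i) hw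
  set m : Fin p → ℝ := fun i => M i i with hm
  have hMdd : M = Matrix.diagonal m := by
    ext i j
    by_cases h : i = j
    · subst h; simp [Matrix.diagonal_apply_eq, hm]
    · rw [Matrix.diagonal_apply_ne _ h]; exact hMdiag i j h
  have hxx : ∀ i j, xc X i ⬝ᵥ xc X j = M i j := by
    intro i j
    simp [hM, Matrix.mul_apply, dotProduct, xc]
  have hmnonneg : ∀ i, 0 ≤ m i := by
    intro i
    have h := hxx i i
    calc (0:ℝ) ≤ xc X i ⬝ᵥ xc X i := Finset.sum_nonneg fun k _ => mul_self_nonneg _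
    _ = m i := h
  have hxii' : ∀ i, xc X i ⬝ᵥ xc X i = m i := fun i => hxx i i
  set θ : Fin p → ℝ := fun i => μ * (w i - m i) with hθ
  -- column eigen-equation
  have heig : ∀ i, A *ᵥ xc X i = θ i • xc X i := by
    intro i
    funext k
    have h := congrFun (congrFun hstat' k) i
    have hl : (A * X) k i = (A *ᵥ xc X i) k := by
      simp [Matrix.mul_apply, Matrix.mulVec, dotProduct, xc]
    have hr : (μ • (X * (Matrix.diagonal w - M))) k i = μ * (X k i * (w i - m i)) := by
      have : Matrix.diagonal w - M = Matrix.diagonal (fun i => w i - m i) := by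
        rw [hMdd, Matrix.diagonal_sub]
      rw [this]
      simp [Matrix.mul_diagonal]
    rw [hl, hr] at h
    rw [h]
    simp [hθ, xc]
    ring
  -- orthonormal eigenbasis from V
  have hVVt : V * Vᵀ = 1 := mul_eq_one_comm.mp hV
  set u : Fin n → Fin n → ℝ := fun t k => V k t with hu
  have huu : ∀ t s, u t ⬝ᵥ u s = if t = s then 1 else 0 := by
    intro t s
    have h := congrFun (congrFun hV t) s
    rw [Matrix.mul_apply] at h
    simpa [Matrix.one_apply, dotProduct, hu, Matrix.transpose_apply] using h
  have hAu : ∀ t, A *ᵥ u t = lam t • u t := by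
    intro t
    funext k
    have hAV2 : A * V = V * Matrix.diagonal lam := by
      rw [hAV, Matrix.mul_assoc, hV, Matrix.mul_one]
    have h := congrFun (congrFun hAV2 k) t
    rw [Matrix.mul_diagonal] at h
    have hl : (A * V) k t = (A *ᵥ u t) k := by
      simp [Matrix.mul_apply, Matrix.mulVec, dotProduct, hu]
    rw [hl] at h
    rw [h]
    simp [hu]
    ring
  have hdotA : ∀ (a b : Fin n → ℝ), a ⬝ᵥ (A *ᵥ b) = (A *ᵥ a) ⬝ᵥ b := by
    intro a b
    rw [Matrix.dotProduct_mulVec, ← Matrix.mulVec_transpose, hAt]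
  have hθlam : ∀ (l : Fin p) (t : Fin n), θ l ≠ lam t → xc X l ⬝ᵥ u t = 0 := by
    intro l t hne
    have h1 : xc X l ⬝ᵥ (A *ᵥ u t) = lam t * (xc X l ⬝ᵥ u t) := by
      rw [hAu, dotProduct_smul, smul_eq_mul]
    have h2 : xc X l ⬝ᵥ (A *ᵥ u t) = θ l * (xc X l ⬝ᵥ u t) := by
      rw [hdotA, heig, smul_dotProduct, smul_eq_mul]
    have h3 : (θ l - lam t) * (xc X l ⬝ᵥ u t) = 0 := by
      rw [sub_mul, ← h1, ← h2, sub_self]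
    rcases mul_eq_zero.mp h3 with h4 | h4
    · exact absurd (by linarith : θ l = lam t) hne
    · exact h4
  by_cases hzero : ∃ i, m i = 0
  -- ### Case 1 : some column of X vanishes
  · obtain ⟨i, hi⟩ := hzero
    have hMii : M i i = (0:ℝ) := hi
    have hxi0 : xc X i = 0 := by
      have h2 : xc X i ⬝ᵥ xc X i = 0 := by rw [hxx]; exact hMii
      funext k
      have h3 := (Finset.sum_eq_zero_iff_of_nonneg
        (fun k _ => mul_self_nonneg (X k i))).mp h2 k (Finset.mem_univ k)
      exact mul_self_eq_zero.mp h3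
    have hp1n : p - 1 < n := by omega
    have hp1p : p - 1 < p := by omega
    set K : Finset (Fin p) := Finset.univ.erase i with hK
    have hKcard : K.card ≤ p - 1 := by
      rw [hK, Finset.card_erase_of_mem (Finset.mem_univ i)]
      simp
    have hauto : ∀ l, l ∉ K → ∀ t : Fin n, (t:ℕ) ≤ p - 1 → xc X l ⬝ᵥ u t = 0 := by
      intro l hl t _
      have hli : l = i := by
        by_contra hne
        exact hl (Finset.mem_erase.mpr ⟨hne, Finset.mem_univ l⟩)
      rw [hli, hxi0, zero_dotProduct]
    obtain ⟨v, hvv, hperp, hray⟩ :=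
      exists_perp A lam hmono u huu hAu (xc X) (p-1) hp1n K hKcard hauto
    refine ⟨Zcol v i, ?_⟩
    rw [hgoal, q_single_perp A X w μ i v hperp]
    have hxm : xc X i ⬝ᵥ xc X i = (0:ℝ) := by rw [hxx]; exact hMii
    rw [hxm]
    have key1 : lam ⟨p-1, hp1n⟩ < μ * w ⟨p-1, hp1p⟩ := by
      have h6 := hwlam ⟨p-1, hp1p⟩
      have h7 : Fin.castLE hpn.le (⟨p-1, hp1p⟩ : Fin p) = ⟨p-1, hp1n⟩ := rfl
      rw [h7] at h6
      rw [div_lt_iff₀ hμ] at h6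
      linarith
    have key2 : w ⟨p-1, hp1p⟩ ≤ w i := by
      apply hwanti.antitone
      have : (i:ℕ) ≤ p - 1 := by omega
      exact this
    have h8 : lam ⟨p-1, hp1n⟩ < μ * w i := by nlinarith
    nlinarith [mul_pos (show (0:ℝ) < μ * w i - lam ⟨p-1, hp1n⟩ by linarith) hvv]
  -- all columns nonzero
  push_neg at hzero
  have hmpos : ∀ i, 0 < m i := fun i => (hmnonneg i).lt_of_ne (Ne.symm (hzero i))
  by_cases hswap : ∃ i j : Fin p, i < j ∧ θ j < θ i
  -- ### Case 2a : an inversion, use a two-column direction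
  · obtain ⟨i, j, hij, hθij⟩ := hswap
    have hij' : i ≠ j := ne_of_lt hij
    set dv : ℝ := θ i - θ j with hdv
    have hdpos : 0 < dv := by rw [hdv]; linarith
    have hden : 0 < μ * m i + dv := by nlinarith [hmpos i]
    set ca : ℝ := μ * m i + dv with hca
    set cb : ℝ := -(μ * m j) with hcb
    set a : Fin n → ℝ := ca • xc X j with ha
    set b : Fin n → ℝ := cb • xc X i with hb
    -- dot product facts
    have hxij : xc X i ⬝ᵥ xc X j = 0 := by rw [hxx]; exact hMdiag i j hij'
    have hxji : xc X j ⬝ᵥ xc X i = 0 := by rw [hxx]; exact hMdiag j i (Ne.symm hij')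
    have hxii : xc X i ⬝ᵥ xc X i = m i := hxx i i
    have hxjj : xc X j ⬝ᵥ xc X j = m j := hxx j j
    have hAxj : xc X j ⬝ᵥ (A *ᵥ xc X j) = θ j * m j := by
      rw [heig, dotProduct_smul, smul_eq_mul, hxjj]
    have hAxi : xc X i ⬝ᵥ (A *ᵥ xc X i) = θ i * m i := by
      rw [heig, dotProduct_smul, smul_eq_mul, hxii]
    have haAa : a ⬝ᵥ (A *ᵥ a) = ca^2 * (θ j * m j) := by
      rw [ha, Matrix.mulVec_smul, smul_dotProduct, dotProduct_smul, hAxj, smul_eq_mul,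
        smul_eq_mul]
      ring
    have hbAb : b ⬝ᵥ (A *ᵥ b) = cb^2 * (θ i * m i) := by
      rw [hb, Matrix.mulVec_smul, smul_dotProduct, dotProduct_smul, hAxi, smul_eq_mul,
        smul_eq_mul]
      ring
    have hab : a ⬝ᵥ b = 0 := by
      rw [ha, hb, smul_dotProduct, dotProduct_smul, hxji, smul_zero, smul_zero]
    have hba : b ⬝ᵥ a = 0 := by
      rw [ha, hb, smul_dotProduct, dotProduct_smul, hxij, smul_zero, smul_zero]
    have haxi : a ⬝ᵥ xc X i = 0 := by
      rw [ha, smul_dotProduct, hxji, smul_zero]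
    have haxj : a ⬝ᵥ xc X j = ca * m j := by
      rw [ha, smul_dotProduct, hxjj, smul_eq_mul]
    have hbxi : b ⬝ᵥ xc X i = cb * m i := by
      rw [hb, smul_dotProduct, hxii, smul_eq_mul]
    have hbxj : b ⬝ᵥ xc X j = 0 := by
      rw [hb, smul_dotProduct, hxij, smul_zero]
    have haa : a ⬝ᵥ a = ca^2 * m j := by
      rw [ha, smul_dotProduct, dotProduct_smul, hxjj, smul_eq_mul, smul_eq_mul]
      ring
    have hbb : b ⬝ᵥ b = cb^2 * m i := by
      rw [hb, smul_dotProduct, dotProduct_smul, hxii, smul_eq_mul, smul_eq_mul]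
      ring
    have hsuma : ∑ l, (a ⬝ᵥ xc X l) * (xc X l ⬝ᵥ a) = ca^2 * (m j * m j) := by
      rw [Finset.sum_eq_single j]
      · rw [haxj, ha, dotProduct_smul, hxjj, smul_eq_mul]
        ring
      · intro l _ hl
        rw [ha, smul_dotProduct, hxx, hMdiag j l (Ne.symm hl)]
        simp
      · simp
    have hsumb : ∑ l, (b ⬝ᵥ xc X l) * (xc X l ⬝ᵥ b) = cb^2 * (m i * m i) := by
      rw [Finset.sum_eq_single i]
      · rw [hbxi, hb, dotProduct_smul, hxii, smul_eq_mul]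
        ring
      · intro l _ hl
        rw [hb, smul_dotProduct, hxx, hMdiag i l (Ne.symm hl)]
        simp
      · simp
    refine ⟨Zcol a i + Zcol b j, ?_⟩
    rw [hgoal]
    have qval : ((Zcol a i + Zcol b j)ᵀ * Hq A X w μ (Zcol a i + Zcol b j)).trace
        = ca^2 * (m j * (μ * m j - dv)) + 2*μ*ca*cb*(m i * m j)
          + cb^2 * (m i * (μ * m i + dv)) := by
      rw [q_add, q_single, q_single, q_single, q_single,
        if_pos rfl, if_pos rfl, if_neg hij', if_neg (Ne.symm hij'),
        hsuma, hsumb, haAa, hbAb, hab, hba, haxi, haxj, hbxi, hbxj, haa, hbb,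
        hxij, hxji, hxii, hxjj, hdv]
      simp only [hθ]
      ring
    rw [qval]
    have hrel : μ * m j - μ * m i - dv = μ * (w j - w i) := by
      rw [hdv]; simp only [hθ]; ring
    have hval : ca^2 * (m j * (μ * m j - dv)) + 2*μ*ca*cb*(m i * m j)
        + cb^2 * (m i * (μ * m i + dv))
        = (μ * m i + dv) * (m j * dv * (μ * m j - μ * m i - dv)) := by
      rw [hca, hcb]
      ring
    rw [hval, hrel]
    apply mul_neg_of_pos_of_neg hden
    apply mul_neg_of_pos_of_neg (mul_pos (hmpos j) hdpos)
    nlinarith [hwanti hij]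
  push_neg at hswap
  have hmonoθ : ∀ i j : Fin p, i ≤ j → θ i ≤ θ j := by
    intro i j hij
    rcases eq_or_lt_of_le hij with h | h
    · rw [h]
    · exact hswap i j h
  by_cases hall : ∀ i, θ i = lam (Fin.castLE hpn.le i)
  -- ### global minimizer form : contradiction with hnotmin
  · exfalso
    apply hnotmin
    have hs : ∀ i, Real.sqrt (m i) ≠ 0 := fun i => (Real.sqrt_pos.mpr (hmpos i)).ne'
    refine ⟨Matrix.of (fun k i => X k i / Real.sqrt (m i)), fun i => Real.sqrt (m i),
      ?_, ?_, ?_, ?_⟩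
    · ext i j
      have hentry : (((Matrix.of (fun k i => X k i / Real.sqrt (m i)))ᵀ *
          (Matrix.of (fun k i => X k i / Real.sqrt (m i)))) : Matrix (Fin p) (Fin p) ℝ) i j
          = (xc X i ⬝ᵥ xc X j) / (Real.sqrt (m i) * Real.sqrt (m j)) := by
        rw [Matrix.mul_apply]
        simp only [Matrix.transpose_apply, Matrix.of_apply, dotProduct]
        rw [Finset.sum_div]
        exact Finset.sum_congr rfl fun k _ => by rw [div_mul_div_comm]; rfl
      rw [hentry]
      by_cases h : i = j
      · subst h
        rw [hxii', Real.mul_self_sqrt (hmnonneg i), div_self (hzero i), Matrix.one_apply_eq]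
      · rw [hxx, hMdiag i j h, Matrix.one_apply_ne h, zero_div]
    · intro i
      have h1 : (fun k => (Matrix.of (fun k i => X k i / Real.sqrt (m i))) k i)
          = (Real.sqrt (m i))⁻¹ • xc X i := by
        funext k
        simp [xc, div_eq_inv_mul]
      rw [h1, Matrix.mulVec_smul, heig, ← hall i, smul_comm]
    · intro i
      left
      have h2 : m i = w i - lam (Fin.castLE hpn.le i) / μ := by
        have h3 := hall i
        rw [hθ] at h3
        field_simp at h3 ⊢
        linarith
      rw [← h2]
    · ext k i
      rw [Matrix.mul_diagonal, Matrix.of_apply, div_mul_cancel₀ _ (hs i)]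
  -- ### Case 2b : order respected but some eigenvalue misplaced
  push_neg at hall
  obtain ⟨i₀, hi₀ne⟩ := hall
  set N : ℕ := (i₀ : ℕ) with hN
  have hN1p : N + 1 ≤ p := i₀.isLt
  have hNp : N ≤ p := le_of_lt i₀.isLt
  have hNn : N < n := lt_trans i₀.isLt hpn
  have hcast : (⟨N, hNn⟩ : Fin n) = Fin.castLE hpn.le i₀ := rfl
  -- the key inequality lam i₀ < θ i₀
  have hgt : lam (Fin.castLE hpn.le i₀) < θ i₀ := by
    rcases lt_trichotomy (θ i₀) (lam (Fin.castLE hpn.le i₀)) with hlt | heq | hgt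
    · exfalso
      -- dimension-counting contradiction
      have hxu0 : ∀ l : Fin p, (l:ℕ) ≤ N → ∀ t : Fin n, N ≤ (t:ℕ) →
          xc X l ⬝ᵥ u t = 0 := by
        intro l hl t ht
        apply hθlam
        have h1 : θ l ≤ θ i₀ := hmonoθ l i₀ hl
        have h2 : lam (Fin.castLE hpn.le i₀) ≤ lam t := hmono ht
        exact (by linarith : θ l < lam t).ne
      set dd : Fin (N+1) → (Fin N → ℝ) :=
        fun l t => xc X (Fin.castLE hN1p l) ⬝ᵥ u (Fin.castLE hNn.le t) with hdd
      have hddorth : ∀ l s : Fin (N+1), (∑ t, dd l t * dd s t)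
          = M (Fin.castLE hN1p l) (Fin.castLE hN1p s) := by
        intro l s
        have h0 := parseval V hVVt (xc X (Fin.castLE hN1p l)) (xc X (Fin.castLE hN1p s))
        rw [hxx] at h0
        have hres := sum_restrict hNn.le
          (fun t => (xc X (Fin.castLE hN1p l) ⬝ᵥ u t) * (xc X (Fin.castLE hN1p s) ⬝ᵥ u t))
          (fun t ht => by
            show (xc X (Fin.castLE hN1p l) ⬝ᵥ u t) * (xc X (Fin.castLE hN1p s) ⬝ᵥ u t) = 0
            rw [hxu0 (Fin.castLE hN1p l) (by simpa using Fin.is_le l) t ht, zero_mul])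
        calc ∑ t, dd l t * dd s t
            = ∑ t : Fin N, (xc X (Fin.castLE hN1p l) ⬝ᵥ u (Fin.castLE hNn.le t)) *
              (xc X (Fin.castLE hN1p s) ⬝ᵥ u (Fin.castLE hNn.le t)) := rfl
          _ = ∑ t : Fin n, (xc X (Fin.castLE hN1p l) ⬝ᵥ u t) *
              (xc X (Fin.castLE hN1p s) ⬝ᵥ u t) := hres.symm
          _ = M (Fin.castLE hN1p l) (Fin.castLE hN1p s) := h0.symm
      have hli : LinearIndependent ℝ dd := by
        rw [Fintype.linearIndependent_iff]
        intro g hg l₀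
        have hG : ∀ t, (∑ l, g l * dd l t) = 0 := by
          intro t
          have h5 := congrFun hg t
          simpa [Finset.sum_apply, Pi.smul_apply, smul_eq_mul] using h5
        have h6 : ∑ l, g l * (∑ t, dd l t * dd l₀ t) = 0 := by
          have h7 : ∀ l, g l * (∑ t, dd l t * dd l₀ t)
              = ∑ t, (g l * dd l t) * dd l₀ t := by
            intro l
            rw [Finset.mul_sum]
            exact Finset.sum_congr rfl fun t _ => by ring
          rw [Finset.sum_congr rfl (fun l _ => h7 l), Finset.sum_comm]
          calc ∑ t, ∑ l, (g l * dd l t) * dd l₀ t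
              = ∑ t, (∑ l, g l * dd l t) * dd l₀ t := by
                exact Finset.sum_congr rfl fun t _ => (Finset.sum_mul _ _ _).symm
          _ = 0 := by simp [hG]
        rw [Finset.sum_congr rfl (fun l _ => by rw [hddorth l l₀])] at h6
        rw [Finset.sum_eq_single l₀] at h6
        · rcases mul_eq_zero.mp h6 with h8 | h8
          · exact h8
          · exact absurd h8 (ne_of_gt (hmpos _))
        · intro l _ hl
          rw [hMdiag _ _ (fun hc => hl (Fin.castLE_injective hN1p hc)), mul_zero]
        · simp
      have hcard := hli.fintype_card_le_finrank
      simp only [Module.finrank_pi, Fintype.card_fin] at hcard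
      omega
    · exact absurd heq hi₀ne
    · exact hgt
  -- construct the descent direction
  set K : Finset (Fin p) := Finset.image (Fin.castLE hNp) (Finset.univ : Finset (Fin N))
    with hK
  have hKcard : K.card ≤ N := by
    rw [hK, Finset.card_image_of_injective _ (Fin.castLE_injective hNp), Finset.card_univ,
      Fintype.card_fin]
  have hauto : ∀ l, l ∉ K → ∀ t : Fin n, (t:ℕ) ≤ N → xc X l ⬝ᵥ u t = 0 := by
    intro l hl t ht
    have hNl : N ≤ (l:ℕ) := by
      by_contra hc
      push_neg at hc
      exact hl (Finset.mem_image.mpr ⟨⟨l, hc⟩, Finset.mem_univ _, by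
        apply Fin.ext
        rfl⟩)
    have h1 : θ i₀ ≤ θ l := hmonoθ i₀ l hNl
    have h2 : lam t ≤ lam (Fin.castLE hpn.le i₀) := hmono ht
    exact hθlam l t (by linarith : lam t < θ l).ne'
  obtain ⟨v, hvv, hperp, hray⟩ :=
    exists_perp A lam hmono u huu hAu (xc X) N hNn K hKcard hauto
  refine ⟨Zcol v i₀, ?_⟩
  rw [hgoal, q_single_perp A X w μ i₀ v hperp]
  rw [hxii']
  have h7 : μ * (m i₀ - w i₀) = -θ i₀ := by rw [hθ]; ring
  rw [h7]
  rw [hcast] at hray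
  nlinarith [mul_lt_mul_of_pos_right hgt hvv]
end
end

section
/- Let Z₂ ∈ ℝ^{(n−p)×p}, Λ̄_p = diag(λ_{p+1},…,λ_n), Λ_p = diag(λ₁,…,λ_p) with λ₁ ≤ ⋯ ≤ λ_n. Then tr(Z₂ᵀ Λ̄_p Z₂) − tr(Z₂ᵀ Z₂ Λ_p) is bounded below by tr(Z₂ᵀZ₂)(λ_{p+1} − λ_p) and above by tr(Z₂ᵀZ₂)(λ_n − λ₁), and both bounds are attained. -/
open Matrix

lemma stmt13_trace_ZtZ {m q : ℕ} (Z : Matrix (Fin m) (Fin q) ℝ) :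
    (Zᵀ * Z).trace = ∑ j, ∑ i, (Z i j)^2 := by
  simp [Matrix.trace, Matrix.diag, Matrix.mul_apply, sq]

lemma stmt13_trace_diff {m q : ℕ} (d : Fin m → ℝ) (e : Fin q → ℝ)
    (Z : Matrix (Fin m) (Fin q) ℝ) :
    (Zᵀ * Matrix.diagonal d * Z).trace - (Zᵀ * Z * Matrix.diagonal e).trace
    = ∑ j, ∑ i, (Z i j)^2 * (d i - e j) := by
  simp only [Matrix.trace, Matrix.diag, Matrix.mul_apply, Matrix.transpose_apply,
    Matrix.diagonal_apply, Finset.sum_ite_eq, Finset.mem_univ, if_true,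
    Finset.sum_ite_eq', mul_ite, mul_zero, ite_mul, zero_mul]
  rw [← Finset.sum_sub_distrib]
  congr 1; ext j
  rw [Finset.sum_mul, ← Finset.sum_sub_distrib]
  congr 1; ext i; ring

/-- Bounds `tr(Z₂ᵀZ₂)(λ_{p+1}−λ_p) ≤ tr(Z₂ᵀΛ̄_pZ₂) − tr(Z₂ᵀZ₂Λ_p)
≤ tr(Z₂ᵀZ₂)(λ_n−λ₁)`, and both bounds are attained. -/
theorem stmt_13 {n p : ℕ} (hp : 0 < p) (hpn : p < n)
    (lam : Fin n → ℝ) (hmono : Monotone lam) :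
    (∀ Z : Matrix (Fin (n - p)) (Fin p) ℝ,
      (Zᵀ * Z).trace * (lam ⟨p, hpn⟩ - lam ⟨p - 1, by omega⟩)
        ≤ (Zᵀ * Matrix.diagonal (fun i : Fin (n - p) =>
              lam ⟨p + i.1, by have := i.isLt; omega⟩) * Z).trace
          - (Zᵀ * Z * Matrix.diagonal (fun i : Fin p =>
              lam (Fin.castLE hpn.le i))).trace
      ∧ (Zᵀ * Matrix.diagonal (fun i : Fin (n - p) =>
              lam ⟨p + i.1, by have := i.isLt; omega⟩) * Z).trace
          - (Zᵀ * Z * Matrix.diagonal (fun i : Fin p =>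
              lam (Fin.castLE hpn.le i))).trace
        ≤ (Zᵀ * Z).trace * (lam ⟨n - 1, by omega⟩ - lam ⟨0, by omega⟩))
    ∧ (∃ Z : Matrix (Fin (n - p)) (Fin p) ℝ, (Zᵀ * Z).trace = 1 ∧
        (Zᵀ * Matrix.diagonal (fun i : Fin (n - p) =>
            lam ⟨p + i.1, by have := i.isLt; omega⟩) * Z).trace
          - (Zᵀ * Z * Matrix.diagonal (fun i : Fin p =>
              lam (Fin.castLE hpn.le i))).trace
        = lam ⟨p, hpn⟩ - lam ⟨p - 1, by omega⟩)
    ∧ (∃ Z : Matrix (Fin (n - p)) (Fin p) ℝ, (Zᵀ * Z).trace = 1 ∧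
        (Zᵀ * Matrix.diagonal (fun i : Fin (n - p) =>
            lam ⟨p + i.1, by have := i.isLt; omega⟩) * Z).trace
          - (Zᵀ * Z * Matrix.diagonal (fun i : Fin p =>
              lam (Fin.castLE hpn.le i))).trace
        = lam ⟨n - 1, by omega⟩ - lam ⟨0, by omega⟩) := by
  refine ⟨fun Z => ?_, ?_, ?_⟩
  · rw [stmt13_trace_diff, stmt13_trace_ZtZ]
    constructor
    · rw [Finset.sum_mul]
      apply Finset.sum_le_sum
      intro j _
      rw [Finset.sum_mul]
      apply Finset.sum_le_sum
      intro i _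
      apply mul_le_mul_of_nonneg_left _ (sq_nonneg _)
      apply sub_le_sub
      · exact hmono (by simp [Fin.le_def])
      · exact hmono (by simp [Fin.le_def]; omega)
    · rw [Finset.sum_mul]
      apply Finset.sum_le_sum
      intro j _
      rw [Finset.sum_mul]
      apply Finset.sum_le_sum
      intro i _
      apply mul_le_mul_of_nonneg_left _ (sq_nonneg _)
      apply sub_le_sub
      · exact hmono (by simp [Fin.le_def]; omega)
      · exact hmono (by simp [Fin.le_def])
  · refine ⟨Matrix.single ⟨0, by omega⟩ ⟨p - 1, by omega⟩ 1, ?_, ?_⟩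
    · rw [stmt13_trace_ZtZ]
      simp [Matrix.single, ite_pow, ite_and, Finset.sum_ite_eq]
    · rw [stmt13_trace_diff]
      simp [Matrix.single, ite_pow, ite_and, ite_mul, Finset.sum_ite_eq,
        Fin.castLE]
  · refine ⟨Matrix.single ⟨n - p - 1, by omega⟩ ⟨0, hp⟩ 1, ?_, ?_⟩
    · rw [stmt13_trace_ZtZ]
      simp [Matrix.single, ite_pow, ite_and, Finset.sum_ite_eq]
    · rw [stmt13_trace_diff]
      simp [Matrix.single, ite_pow, ite_and, ite_mul, Finset.sum_ite_eq,
        Fin.castLE]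
      congr 2
      omega
end

section
/- Let Z₁ = (z_{ij}) ∈ ℝ^{p×p}, W = diag(w₁,…,w_p), Λ_p = diag(λ₁,…,λ_p), S_p = diag(s₁,…,s_p) with s_i² = w_i − λ_i/μ, μ > 0. Then μ tr(Z₁ᵀWZ₁) − tr(Z₁ᵀZ₁Λ_p) + μ tr(Z₁ᵀS_pZ₁ᵀS_p) = 2∑_{i=1}^p (μw_i − λ_i) z_{ii}² + ∑_{i<j} (z_{ij}, z_{ji}) M_{ij} (z_{ij}, z_{ji})ᵀ, where M_{ij} = [[μw_i − λ_j, μs_is_j], [μs_is_j, μw_j − λ_i]]. -/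
/-!
Entrywise, the left side is `∑ i j, ((μ w_i − λ_j) z_ij² + μ s_i s_j z_ij z_ji)`. Splitting the
double sum into the diagonal and the symmetric pairs `i < j`, and using `μ s_i² = μ w_i − λ_i` on
the diagonal, gives the right side.
-/

open Matrix

theorem Finset.sum_sum_eq_sum_diag_add_sum_lt {ι M : Type*} [Fintype ι] [LinearOrder ι]
    [AddCommMonoid M] (F : ι → ι → M) :
    ∑ i, ∑ j, F i j = ∑ i, F i i + ∑ i, ∑ j, if i < j then F i j + F j i else 0 := by
  have trichotomy : ∀ i j, F i j = ((if i < j then F i j else 0) + if i = j then F i j else 0)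
      + if j < i then F i j else 0 := by
    intro i j
    rcases lt_trichotomy i j with h | rfl | h
    · simp [h, h.ne, h.not_gt]
    · simp
    · simp [h, h.ne', h.not_gt]
  calc ∑ i, ∑ j, F i j
      = ∑ i, ∑ j, (((if i < j then F i j else 0) + if i = j then F i j else 0)
          + if j < i then F i j else 0) :=
        Finset.sum_congr rfl fun i _ => Finset.sum_congr rfl fun j _ => trichotomy i j
    _ = ∑ i, ∑ j, (if i < j then F i j else 0) + ∑ i, F i i
          + ∑ i, ∑ j, (if j < i then F i j else 0) := by
        simp only [Finset.sum_add_distrib, Finset.sum_ite_eq, Finset.mem_univ, if_true]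
    _ = _ := by
        rw [Finset.sum_comm (f := fun i j => if j < i then F i j else 0), add_right_comm,
          add_comm, ← Finset.sum_add_distrib]
        simp only [← Finset.sum_add_distrib, ite_add_ite, add_zero]

namespace Matrix

variable {m n R : Type*} [Fintype m] [Fintype n] [CommSemiring R]

theorem trace_transpose_mul_diagonal_mul [DecidableEq m] (Z : Matrix m n R) (d : m → R) :
    (Zᵀ * diagonal d * Z).trace = ∑ i, ∑ j, d i * Z i j ^ 2 := by
  simp only [trace, diag_apply, mul_apply, transpose_apply, diagonal_apply, mul_ite,
    mul_zero, Finset.sum_ite_eq', Finset.mem_univ, if_true]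
  rw [Finset.sum_comm]
  exact Finset.sum_congr rfl fun i _ => Finset.sum_congr rfl fun j _ => by ring

theorem trace_transpose_mul_mul_diagonal [DecidableEq n] (Z : Matrix m n R) (d : n → R) :
    (Zᵀ * Z * diagonal d).trace = ∑ i, ∑ j, d j * Z i j ^ 2 := by
  simp only [trace, diag_apply, mul_apply, transpose_apply, diagonal_apply, mul_ite,
    mul_zero, Finset.sum_ite_eq', Finset.mem_univ, if_true, Finset.sum_mul]
  rw [Finset.sum_comm]
  exact Finset.sum_congr rfl fun i _ => Finset.sum_congr rfl fun j _ => by ring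

theorem trace_transpose_mul_diagonal_mul_transpose_mul_diagonal [DecidableEq n]
    (Z : Matrix n n R) (d : n → R) :
    (Zᵀ * diagonal d * Zᵀ * diagonal d).trace = ∑ i, ∑ j, d i * d j * Z i j * Z j i := by
  simp only [trace, diag_apply, mul_apply, transpose_apply, diagonal_apply, mul_ite,
    mul_zero, Finset.sum_ite_eq', Finset.mem_univ, if_true, Finset.sum_mul]
  rw [Finset.sum_comm]
  exact Finset.sum_congr rfl fun i _ => Finset.sum_congr rfl fun j _ => by ring

end Matrix

theorem mul_sqrt_sub_div_mul_self {μ w l : ℝ} (hμ : 0 < μ) (hl : l < μ * w) :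
    μ * (√(w - l / μ) * √(w - l / μ)) = μ * w - l := by
  have hpos : 0 ≤ w - l / μ := by
    rw [sub_nonneg, div_le_iff₀ hμ]
    linarith
  rw [Real.mul_self_sqrt hpos]
  field_simp

/-- Decomposition of the Hessian quadratic form on the
`V_p`-component:
`μ tr(Z₁ᵀWZ₁) − tr(Z₁ᵀZ₁Λ_p) + μ tr(Z₁ᵀS_pZ₁ᵀS_p)
 = 2∑ᵢ (μwᵢ−λᵢ) z_{ii}² + ∑_{i<j} (z_{ij}, z_{ji}) M_{ij} (z_{ij}, z_{ji})ᵀ`. -/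
theorem stmt_14 {p : ℕ} (μ : ℝ) (hμ : 0 < μ)
    (w lam : Fin p → ℝ) (hwl : ∀ i : Fin p, lam i < μ * w i)
    (s : Fin p → ℝ) (hs : ∀ i : Fin p, s i = Real.sqrt (w i - lam i / μ))
    (Z : Matrix (Fin p) (Fin p) ℝ) :
    μ * (Zᵀ * Matrix.diagonal w * Z).trace
      - (Zᵀ * Z * Matrix.diagonal lam).trace
      + μ * (Zᵀ * Matrix.diagonal s * Zᵀ * Matrix.diagonal s).trace
    = 2 * ∑ i : Fin p, (μ * w i - lam i) * (Z i i) ^ 2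
      + ∑ i : Fin p, ∑ j : Fin p, if i < j then
          (μ * w i - lam j) * (Z i j) ^ 2
          + 2 * (μ * s i * s j) * (Z i j) * (Z j i)
          + (μ * w j - lam i) * (Z j i) ^ 2
        else 0 := by
  have hss : ∀ i, μ * (s i * s i) = μ * w i - lam i := fun i => by
    rw [hs i]
    exact mul_sqrt_sub_div_mul_self hμ (hwl i)
  calc _ = ∑ i, ∑ j, ((μ * w i - lam j) * Z i j ^ 2 + μ * s i * s j * Z i j * Z j i) := by
        rw [trace_transpose_mul_diagonal_mul, trace_transpose_mul_mul_diagonal,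
          trace_transpose_mul_diagonal_mul_transpose_mul_diagonal]
        simp only [Finset.mul_sum, ← Finset.sum_sub_distrib, ← Finset.sum_add_distrib]
        exact Finset.sum_congr rfl fun i _ => Finset.sum_congr rfl fun j _ => by ring
    _ = _ := by
        rw [Finset.sum_sum_eq_sum_diag_add_sum_lt, Finset.mul_sum]
        congr 1
        · refine Finset.sum_congr rfl fun i _ => ?_
          linear_combination Z i i ^ 2 * hss i
        · refine Finset.sum_congr rfl fun i _ => Finset.sum_congr rfl fun j _ => ?_
          split_ifs <;> ring
end

section
/- Fix λ₁ < λ₂ < ⋯ < λ_p and endpoints a > b. Over all decreasing sequences w₁ > w₂ > ⋯ > w_p with w₁ = a and w_p = b, the quantity F(W) = min_{1≤i<j≤p} (w_i − w_j)(λ_j − λ_i) is maximized by the choice ŵ_i − ŵ_{i+1} = (∑_{k=1}^{p−1} (λ_{k+1} − λ_k)^{−1})^{−1} · (a − b)/(λ_{i+1} − λ_i), and the maximal value is F(Ŵ) = (∑_{k=1}^{p−1} (λ_{k+1} − λ_k)^{−1})^{−1} (a − b). -/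
private lemma fin_congr {n : ℕ} (f : Fin n → ℝ) {i j : ℕ} (h : i = j) (hi : i < n) (hj : j < n) :
    f ⟨i, hi⟩ = f ⟨j, hj⟩ := by subst h; rfl

private lemma tele_sum (f : ℕ → ℝ) : ∀ j i, i ≤ j →
    ∑ k ∈ Finset.Ico i j, (f k - f (k + 1)) = f i - f j := by
  intro j
  induction j with
  | zero => intro i hi; interval_cases i; simp
  | succ j ih =>
    intro i hi
    rcases eq_or_lt_of_le hi with rfl | h
    · simp
    · rw [Finset.sum_Ico_succ_top (by omega), ih i (by omega)]; ring

private lemma tele_sum' (f : ℕ → ℝ) {i j : ℕ} (h : i ≤ j) :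
    ∑ k ∈ Finset.Ico i j, (f (k + 1) - f k) = f j - f i := by
  have := tele_sum (fun n => -f n) j i h
  simp only [neg_sub_neg] at this
  linarith [this]

noncomputable def Fmin {p : ℕ} (hp : 2 ≤ p) (lam w : Fin p → ℝ) : ℝ :=
  (Finset.univ.filter (fun q : Fin p × Fin p => q.1 < q.2)).inf'
    ⟨(⟨0, by omega⟩, ⟨1, by omega⟩), by simp only [Finset.mem_filter, Finset.mem_univ, true_and, Fin.mk_lt_mk]; omega⟩
    (fun q => (w q.1 - w q.2) * (lam q.2 - lam q.1))

/-- Over decreasing weights with fixed endpoints `w₁ = a`,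
`w_p = b`, the quantity `F(W) = min_{i<j}(wᵢ−wⱼ)(λⱼ−λᵢ)` is maximized by the
choice `ŵ` whose consecutive gaps are inversely proportional to the eigengaps,
with maximal value `(∑ₖ (λ_{k+1}−λ_k)⁻¹)⁻¹ (a − b)`. -/
theorem stmt_17 {p : ℕ} (hp : 2 ≤ p)
    (lam : Fin p → ℝ) (hlam : StrictMono lam)
    (a b : ℝ) (hab : b < a)
    (what : Fin p → ℝ)
    (h0 : what ⟨0, by omega⟩ = a)
    (hlast : what ⟨p - 1, by omega⟩ = b)
    (hgap : ∀ k : Fin (p - 1),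
      what ⟨k.1, by have := k.isLt; omega⟩ - what ⟨k.1 + 1, by have := k.isLt; omega⟩
        = (∑ m : Fin (p - 1), (lam ⟨m.1 + 1, by have := m.isLt; omega⟩
            - lam ⟨m.1, by have := m.isLt; omega⟩)⁻¹)⁻¹ * (a - b)
          / (lam ⟨k.1 + 1, by have := k.isLt; omega⟩
            - lam ⟨k.1, by have := k.isLt; omega⟩)) :
    (∀ w : Fin p → ℝ, StrictAnti w → w ⟨0, by omega⟩ = a → w ⟨p - 1, by omega⟩ = b →
      Fmin hp lam w ≤ Fmin hp lam what)
    ∧ Fmin hp lam what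
      = (∑ m : Fin (p - 1), (lam ⟨m.1 + 1, by have := m.isLt; omega⟩
          - lam ⟨m.1, by have := m.isLt; omega⟩)⁻¹)⁻¹ * (a - b) := by
  obtain ⟨P, rfl⟩ : ∃ P, p = P + 1 := ⟨p - 1, by omega⟩
  have hP : 1 ≤ P := by omega
  set L : ℕ → ℝ := fun n => lam ⟨min n P, by omega⟩ with hLdef
  set V : ℕ → ℝ := fun n => what ⟨min n P, by omega⟩ with hVdef
  have hLe' : ∀ (n : ℕ) (h : n < P + 1), lam ⟨n, h⟩ = L n := by
    intro n h; rw [hLdef]; exact fin_congr lam (by omega) h (by omega)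
  have hVe' : ∀ (n : ℕ) (h : n < P + 1), what ⟨n, h⟩ = V n := by
    intro n h; rw [hVdef]; exact fin_congr what (by omega) h (by omega)
  simp only [hLe', hVe'] at h0 hlast hgap ⊢
  simp only [Nat.add_sub_cancel] at hlast hgap ⊢
  set S : ℝ := ∑ k ∈ Finset.range P, (L (k + 1) - L k)⁻¹ with hSdef
  have hSsum : (∑ m : Fin (P + 1 - 1), (L (m.1 + 1) - L m.1)⁻¹) = S := by
    rw [Fin.sum_univ_eq_sum_range (fun k => (L (k + 1) - L k)⁻¹) (P + 1 - 1)]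
    simp only [Nat.add_sub_cancel, hSdef]
  rw [hSsum] at hgap ⊢
  have hgpos : ∀ k, k < P → 0 < L (k + 1) - L k := by
    intro k hk
    rw [← hLe' k (by omega), ← hLe' (k + 1) (by omega)]
    have := hlam (show (⟨k, by omega⟩ : Fin (P + 1)) < ⟨k + 1, by omega⟩ from
      Fin.mk_lt_mk.mpr (by omega))
    linarith
  have hSpos : 0 < S := by
    rw [hSdef]
    apply Finset.sum_pos
    · intro k hk
      exact inv_pos.mpr (hgpos k (Finset.mem_range.mp hk))
    · exact ⟨0, Finset.mem_range.mpr (by omega)⟩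
  set c : ℝ := S⁻¹ * (a - b) with hcdef
  have hcpos : 0 < c := mul_pos (inv_pos.mpr hSpos) (by linarith)
  have hgap' : ∀ k, k < P → V k - V (k + 1) = c / (L (k + 1) - L k) := by
    intro k hk; exact hgap ⟨k, by omega⟩
  -- every pair value of what is ≥ c
  have hwhat_ge : ∀ q : Fin (P + 1) × Fin (P + 1), q.1 < q.2 →
      c ≤ (what q.1 - what q.2) * (lam q.2 - lam q.1) := by
    intro q hq
    have hij : q.1.1 < q.2.1 := hq
    have hjP : q.2.1 ≤ P := by have := q.2.2; omega
    have e1 : what q.1 = V q.1.1 := hVe' _ q.1.2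
    have e2 : what q.2 = V q.2.1 := hVe' _ q.2.2
    have e3 : lam q.1 = L q.1.1 := hLe' _ q.1.2
    have e4 : lam q.2 = L q.2.1 := hLe' _ q.2.2
    rw [e1, e2, e3, e4]
    set i := q.1.1
    set j := q.2.1
    have hv : V i - V j = ∑ k ∈ Finset.Ico i j, (c / (L (k + 1) - L k)) := by
      rw [← tele_sum V j i hij.le]
      apply Finset.sum_congr rfl
      intro k hk
      rw [Finset.mem_Ico] at hk
      exact hgap' k (by omega)
    have hl : L j - L i = ∑ k ∈ Finset.Ico i j, (L (k + 1) - L k) :=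
      (tele_sum' L hij.le).symm
    rw [hv, hl]
    have hmem : i ∈ Finset.Ico i j := Finset.mem_Ico.mpr ⟨le_refl i, hij⟩
    have hg : ∀ k ∈ Finset.Ico i j, k < P := by
      intro k hk; rw [Finset.mem_Ico] at hk; omega
    have h1 : c / (L (i + 1) - L i) ≤ ∑ k ∈ Finset.Ico i j, (c / (L (k + 1) - L k)) :=
      Finset.single_le_sum (fun k hk => div_nonneg hcpos.le (hgpos k (hg k hk)).le) hmem
    have h2 : L (i + 1) - L i ≤ ∑ k ∈ Finset.Ico i j, (L (k + 1) - L k) :=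
      Finset.single_le_sum (fun k hk => (hgpos k (hg k hk)).le) hmem
    have hgi : 0 < L (i + 1) - L i := hgpos i (hg i hmem)
    calc c = (c / (L (i + 1) - L i)) * (L (i + 1) - L i) := by field_simp
      _ ≤ _ := mul_le_mul h1 h2 hgi.le (le_trans (div_nonneg hcpos.le hgi.le) h1)
  -- Fmin what = c
  have hFwhat : Fmin hp lam what = c := by
    apply le_antisymm
    · have hmem : ((⟨0, by omega⟩, ⟨1, by omega⟩) : Fin (P + 1) × Fin (P + 1)) ∈
          Finset.univ.filter (fun q : Fin (P + 1) × Fin (P + 1) => q.1 < q.2) := by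
        simp only [Finset.mem_filter, Finset.mem_univ, true_and, Fin.mk_lt_mk]
        omega
      have hval : (what (⟨0, by omega⟩ : Fin (P + 1)) - what ⟨1, by omega⟩) *
          (lam (⟨1, by omega⟩ : Fin (P + 1)) - lam ⟨0, by omega⟩) = c := by
        rw [hVe' 0 (by omega), hVe' 1 (by omega), hLe' 0 (by omega), hLe' 1 (by omega)]
        rw [hgap' 0 (by omega)]
        have := hgpos 0 (by omega)
        field_simp
      rw [← hval]
      exact Finset.inf'_le _ hmem
    · exact Finset.le_inf' _ _ (fun q hq => hwhat_ge q (by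
        simpa only [Finset.mem_filter, Finset.mem_univ, true_and] using hq))
  refine ⟨?_, hFwhat⟩
  intro w hw hw0 hwP
  rw [hFwhat]
  set U : ℕ → ℝ := fun n => w ⟨min n P, by omega⟩ with hUdef
  have hUe' : ∀ (n : ℕ) (h : n < P + 1), w ⟨n, h⟩ = U n := by
    intro n h; rw [hUdef]; exact fin_congr w (by omega) h (by omega)
  rw [hUe'] at hw0 hwP
  have hcons : ∀ k, k < P → Fmin hp lam w ≤ (U k - U (k + 1)) * (L (k + 1) - L k) := by
    intro k hk
    have hmem : ((⟨k, by omega⟩, ⟨k + 1, by omega⟩) : Fin (P + 1) × Fin (P + 1)) ∈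
        Finset.univ.filter (fun q : Fin (P + 1) × Fin (P + 1) => q.1 < q.2) := by
      simp only [Finset.mem_filter, Finset.mem_univ, true_and, Fin.mk_lt_mk]
      omega
    rw [← hLe' (k + 1) (by omega), ← hLe' k (by omega), ← hUe' (k + 1) (by omega),
      ← hUe' k (by omega)]
    exact Finset.inf'_le _ hmem
  have hFS : Fmin hp lam w * S ≤ a - b := by
    rw [hSdef, Finset.mul_sum]
    have hbound : ∀ k ∈ Finset.range P,
        Fmin hp lam w * (L (k + 1) - L k)⁻¹ ≤ U k - U (k + 1) := by
      intro k hk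
      rw [Finset.mem_range] at hk
      rw [← div_eq_mul_inv, div_le_iff₀ (hgpos k hk)]
      exact hcons k hk
    calc ∑ k ∈ Finset.range P, Fmin hp lam w * (L (k + 1) - L k)⁻¹
        ≤ ∑ k ∈ Finset.range P, (U k - U (k + 1)) := Finset.sum_le_sum hbound
      _ = U 0 - U P := by rw [Finset.range_eq_Ico]; exact tele_sum U P 0 (by omega)
      _ = a - b := by rw [hw0, hwP]
  calc Fmin hp lam w = Fmin hp lam w * S * S⁻¹ := by field_simp
    _ ≤ (a - b) * S⁻¹ := mul_le_mul_of_nonneg_right hFS (inv_pos.mpr hSpos).le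
    _ = c := by rw [hcdef]; ring
end
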